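/- arXiv:1704.04512 — 6 statements merged into one kernel-verified Lean document; each statement's English description precedes it below -/
import Mathlib

section
/- For Σ = P_k(K;S) and V = P_k(K)² on a two-dimensional polygon K with k ≥ 1, the index I_S(Σ × V) := dim V - dim ∇·Σ equals 2(k+1); equivalently, the divergence operator maps P_k(K;S) onto P_{k-1}(K)². -/
open MvPolynomial

private lemma finsupp_sum_fin2 (s : Fin 2 →₀ ℕ) : (s.sum fun _ e => e) = s 0 + s 1 := by
  rw [Finsupp.sum_fintype _ _ (fun _ => rfl), Fin.sum_univ_two]

private lemma totalDegree_pderiv_le' {k : ℕ} (j : Fin 2) (p : MvPolynomial (Fin 2) ℝ)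
    (hp : p.totalDegree ≤ k) : (pderiv j p).totalDegree ≤ k - 1 := by
  conv_lhs => rw [p.as_sum]
  rw [map_sum]
  refine totalDegree_finsetSum_le fun d hd => ?_
  rw [pderiv_monomial]
  by_cases hdj : d j = 0
  · simp [hdj]
  refine (totalDegree_monomial_le _ _).trans ?_
  have hds : (d.sum fun _ e => e) ≤ k := le_trans (le_totalDegree hd) hp
  rw [finsupp_sum_fin2] at hds
  show ((d - Finsupp.single j 1).sum fun _ e => e) ≤ k - 1
  rw [finsupp_sum_fin2]
  rw [Finsupp.tsub_apply, Finsupp.tsub_apply]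
  fin_cases j <;> simp [Finsupp.single_apply] <;> simp at hdj <;> omega

private lemma exists_antideriv (j : Fin 2) (p : MvPolynomial (Fin 2) ℝ) :
    ∃ q : MvPolynomial (Fin 2) ℝ, pderiv j q = p ∧ q.totalDegree ≤ p.totalDegree + 1 := by
  refine ⟨∑ d ∈ p.support, monomial (d + Finsupp.single j 1) (p.coeff d / (d j + 1)), ?_, ?_⟩
  · rw [map_sum]
    conv_rhs => rw [p.as_sum]
    refine Finset.sum_congr rfl fun d _ => ?_
    rw [pderiv_monomial, add_tsub_cancel_right]
    congr 1
    rw [Finsupp.add_apply, Finsupp.single_eq_same]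
    push_cast
    field_simp
  · refine totalDegree_finsetSum_le fun d hd => ?_
    refine (totalDegree_monomial_le _ _).trans ?_
    show ((d + Finsupp.single j 1).sum fun _ e => e) ≤ p.totalDegree + 1
    rw [Finsupp.sum_add_index' (fun _ => rfl) (fun _ _ _ => rfl),
      Finsupp.sum_single_index rfl]
    exact Nat.add_le_add_right (le_totalDegree hd) 1

private lemma div_set_eq (k : ℕ) (hk : 1 ≤ k) :
    {f : Fin 2 → MvPolynomial (Fin 2) ℝ |
        ∃ τ : Matrix (Fin 2) (Fin 2) (MvPolynomial (Fin 2) ℝ),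
          τ.IsSymm ∧ (∀ i j, (τ i j).totalDegree ≤ k) ∧
          f = fun i => ∑ j, pderiv j (τ i j)}
      = {f : Fin 2 → MvPolynomial (Fin 2) ℝ | ∀ i, (f i).totalDegree ≤ k - 1} := by
  ext f
  constructor
  · rintro ⟨τ, -, hdeg, rfl⟩ i
    exact totalDegree_finsetSum_le fun j _ => totalDegree_pderiv_le' j _ (hdeg i j)
  · intro hf
    choose q hq hqd using fun i => exists_antideriv i (f i)
    refine ⟨Matrix.diagonal q, Matrix.isSymm_diagonal q, ?_, ?_⟩
    · intro i j
      by_cases h : i = j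
      · subst h
        rw [Matrix.diagonal_apply_eq]
        exact (hqd i).trans (by have := hf i; omega)
      · rw [Matrix.diagonal_apply_ne _ h]
        simp
    · funext i
      rw [Fin.sum_univ_two]
      fin_cases i <;>
        simp [Matrix.diagonal_apply_eq, Matrix.diagonal_apply_ne, hq]

private noncomputable def Vn (n : ℕ) : Submodule ℝ (Fin 2 → MvPolynomial (Fin 2) ℝ) :=
  Submodule.pi Set.univ fun _ => restrictTotalDegree (Fin 2) ℝ n

private lemma set_eq_Vn (n : ℕ) :
    {f : Fin 2 → MvPolynomial (Fin 2) ℝ | ∀ i, (f i).totalDegree ≤ n} = ↑(Vn n) := by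
  ext f
  simp [Vn, Submodule.mem_pi, mem_restrictTotalDegree]

private noncomputable def VnEquiv (n : ℕ) :
    (Vn n) ≃ₗ[ℝ] (Fin 2 → restrictTotalDegree (Fin 2) ℝ n) where
  toFun f i := ⟨f.1 i, f.2 i (Set.mem_univ i)⟩
  map_add' _ _ := rfl
  map_smul' _ _ := rfl
  invFun g := ⟨fun i => (g i : MvPolynomial (Fin 2) ℝ), fun i _ => (g i).2⟩
  left_inv f := rfl
  right_inv g := rfl

private noncomputable def degEquiv (n : ℕ) :
    {s : Fin 2 →₀ ℕ | (s.sum fun _ e => e) ≤ n} ≃ (Σ a : Fin (n + 1), Fin (n + 1 - a)) where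
  toFun s := ⟨⟨s.1 0, by have := s.2; rw [Set.mem_setOf_eq, finsupp_sum_fin2] at this; omega⟩,
      ⟨s.1 1, show s.1 1 < n + 1 - s.1 0 by
        have := s.2; rw [Set.mem_setOf_eq, finsupp_sum_fin2] at this; omega⟩⟩
  invFun p := ⟨Finsupp.single 0 (p.1 : ℕ) + Finsupp.single 1 (p.2 : ℕ), by
    rw [Set.mem_setOf_eq, finsupp_sum_fin2]
    have h1 := p.1.isLt
    have h2 := p.2.isLt
    simp [Finsupp.single_apply]
    omega⟩
  left_inv s := by
    ext i
    fin_cases i <;> simp [Finsupp.single_apply]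
  right_inv p := by
    rcases p with ⟨⟨a, ha⟩, ⟨b, hb⟩⟩
    have h0 : (Finsupp.single (0 : Fin 2) a + Finsupp.single (1 : Fin 2) b) 0 = a := by
      simp [Finsupp.single_apply]
    have h1 : (Finsupp.single (0 : Fin 2) a + Finsupp.single (1 : Fin 2) b) 1 = b := by
      simp [Finsupp.single_apply]
    simp only [Sigma.mk.inj_iff, Fin.mk.injEq]
    constructor
    · exact h0
    · rw [Fin.heq_ext_iff (by rw [h0])]
      exact h1

private lemma finrank_restrict (n : ℕ) :
    Module.finrank ℝ (restrictTotalDegree (Fin 2) ℝ n)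
      = ∑ j ∈ Finset.range (n + 1), (n + 1 - j) := by
  have : Fintype {s : Fin 2 →₀ ℕ | (s.sum fun _ e => e) ≤ n} :=
    Fintype.ofEquiv _ (degEquiv n).symm
  have b : Module.Basis {s : Fin 2 →₀ ℕ | (s.sum fun _ e => e) ≤ n} ℝ
      (restrictTotalDegree (Fin 2) ℝ n) := basisRestrictSupport ℝ _
  rw [Module.finrank_eq_card_basis b,
    Fintype.card_congr (degEquiv n), Fintype.card_sigma]
  simp [Fin.sum_univ_eq_sum_range]

private lemma finrank_Vn (n : ℕ) :
    Module.finrank ℝ (Vn n) = 2 * ∑ j ∈ Finset.range (n + 1), (n + 1 - j) := by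
  have : Module.Free ℝ (restrictTotalDegree (Fin 2) ℝ n) :=
    Module.Free.of_basis (basisRestrictSupport ℝ _ :
      Module.Basis {s : Fin 2 →₀ ℕ | (s.sum fun _ e => e) ≤ n} ℝ (restrictTotalDegree (Fin 2) ℝ n))
  rw [(VnEquiv n).finrank_eq, Module.finrank_pi_fintype, Fin.sum_univ_two,
    finrank_restrict, two_mul]

/-- For `k ≥ 1` in two space dimensions, the row-wise divergence maps the space
`P_k(K;S)` of symmetric `2×2` polynomial tensors of total degree `≤ k` onto the space
`P_{k-1}(K)²` of vector polynomials of total degree `≤ k-1`; equivalently, the index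
`I_S(Σ×V) = dim P_k(K)² - dim ∇·P_k(K;S)` equals `2(k+1)`. -/
theorem div_Pk_symmetric_onto_and_index
    (k : ℕ) (hk : 1 ≤ k) :
    ({f : Fin 2 → MvPolynomial (Fin 2) ℝ |
        ∃ τ : Matrix (Fin 2) (Fin 2) (MvPolynomial (Fin 2) ℝ),
          τ.IsSymm ∧ (∀ i j, (τ i j).totalDegree ≤ k) ∧
          f = fun i => ∑ j, pderiv j (τ i j)}
      = {f : Fin 2 → MvPolynomial (Fin 2) ℝ | ∀ i, (f i).totalDegree ≤ k - 1}) ∧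
    ((Module.finrank ℝ ↥(Submodule.span ℝ
        {f : Fin 2 → MvPolynomial (Fin 2) ℝ | ∀ i, (f i).totalDegree ≤ k}) : ℤ)
      - (Module.finrank ℝ ↥(Submodule.span ℝ
        {f : Fin 2 → MvPolynomial (Fin 2) ℝ |
          ∃ τ : Matrix (Fin 2) (Fin 2) (MvPolynomial (Fin 2) ℝ),
            τ.IsSymm ∧ (∀ i j, (τ i j).totalDegree ≤ k) ∧
            f = fun i => ∑ j, pderiv j (τ i j)}) : ℤ)
      = 2 * (k + 1)) := by
  refine ⟨div_set_eq k hk, ?_⟩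
  rw [div_set_eq k hk, set_eq_Vn k, set_eq_Vn (k - 1), Submodule.span_eq, Submodule.span_eq,
    finrank_Vn, finrank_Vn]
  obtain ⟨m, rfl⟩ : ∃ m, k = m + 1 := ⟨k - 1, by omega⟩
  have h1 : ∀ n : ℕ, ∑ j ∈ Finset.range (n + 1), (n + 1 - j)
      = ∑ j ∈ Finset.range (n + 1), (j + 1) := by
    intro n
    rw [← Finset.sum_range_reflect]
    exact Finset.sum_congr rfl fun j hj => by
      have := Finset.mem_range.mp hj; omega
  rw [h1, h1]
  simp only [Nat.add_sub_cancel]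
  rw [show m + 1 + 1 = (m + 1) + 1 from rfl, Finset.sum_range_succ]
  push_cast
  ring
end

section
/- On the unit square K = (0,1)², for k ≥ 1, the space of divergence-free symmetric tensor fields in Q_k(K;S) (tensor-product polynomials of degree ≤ k in each variable, symmetric-valued) equals J(Φ), where Φ = P_{k,k}(K) ⊕ span{x^{k+1}, x^{k+1}y, x^{k+2}, y^{k+1}, xy^{k+1}, y^{k+2}}, J is the Airy operator, and P_{k₁,k₂} = polynomials of degree ≤ k₁ in x and ≤ k₂ in y. -/
open MvPolynomial

lemma coeff_pderiv' (i : Fin 2) (m : Fin 2 →₀ ℕ) (p : MvPolynomial (Fin 2) ℝ) :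
    coeff m (pderiv i p) = (m i + 1 : ℝ) * coeff (m + Finsupp.single i 1) p := by
  induction p using MvPolynomial.induction_on' with
  | add p q hp hq => simp [hp, hq, mul_add]
  | monomial d c =>
    rw [pderiv_monomial, coeff_monomial, coeff_monomial]
    by_cases h : d = m + Finsupp.single i 1
    · subst h
      have h1 : m + Finsupp.single i 1 - Finsupp.single i 1 = m := by
        exact add_tsub_cancel_right _ _
      have h2 : ((m + Finsupp.single i 1 : Fin 2 →₀ ℕ)) i = m i + 1 := by
        rw [Finsupp.add_apply, Finsupp.single_eq_same]
      rw [if_pos h1, h2]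
      simp only [if_true]; push_cast; ring
    · rw [if_neg h, mul_zero]
      by_cases h2 : d - Finsupp.single i 1 = m
      · rw [if_pos h2]
        have hdi : d i = 0 := by
          by_contra hdi
          apply h
          rw [← h2, tsub_add_cancel_of_le]
          rwa [Finsupp.single_le_iff, Nat.one_le_iff_ne_zero]
        simp [hdi]
      · rw [if_neg h2]

/-- exponent vector `(i, j)` -/
noncomputable def D (i j : ℕ) : Fin 2 →₀ ℕ := Finsupp.single 0 i + Finsupp.single 1 j

lemma D_apply0 (i j : ℕ) : D i j 0 = i := by
  simp [D, Finsupp.single_apply]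

lemma D_apply1 (i j : ℕ) : D i j 1 = j := by
  simp [D, Finsupp.single_apply]

lemma D_repr (m : Fin 2 →₀ ℕ) : m = D (m 0) (m 1) := by
  ext a
  fin_cases a
  · exact (D_apply0 (m 0) (m 1)).symm
  · exact (D_apply1 (m 0) (m 1)).symm

lemma D_inj {i j i' j' : ℕ} : D i j = D i' j' ↔ i = i' ∧ j = j' := by
  constructor
  · intro h
    constructor
    · rw [← D_apply0 i j, h, D_apply0]
    · rw [← D_apply1 i j, h, D_apply1]
  · rintro ⟨rfl, rfl⟩; rfl

lemma D_add0 (i j : ℕ) : D i j + Finsupp.single 0 1 = D (i + 1) j := by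
  rw [D, D, Finsupp.single_add]
  abel

lemma D_add1 (i j : ℕ) : D i j + Finsupp.single 1 1 = D i (j + 1) := by
  rw [D, D, Finsupp.single_add]
  abel

lemma coeff_D_pderiv0 (p : MvPolynomial (Fin 2) ℝ) (i j : ℕ) :
    coeff (D i j) (pderiv 0 p) = ((i : ℝ) + 1) * coeff (D (i + 1) j) p := by
  rw [coeff_pderiv', D_apply0, D_add0]

lemma coeff_D_pderiv1 (p : MvPolynomial (Fin 2) ℝ) (i j : ℕ) :
    coeff (D i j) (pderiv 1 p) = ((j : ℝ) + 1) * coeff (D i (j + 1)) p := by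
  rw [coeff_pderiv', D_apply1, D_add1]

lemma coeff_eq_zero_of_degreeOf_le {p : MvPolynomial (Fin 2) ℝ} {v : Fin 2} {kk : ℕ}
    (h : degreeOf v p ≤ kk) {m : Fin 2 →₀ ℕ} (hm : kk < m v) : coeff m p = 0 := by
  by_contra hc
  exact absurd (degreeOf_le_iff.mp h m (MvPolynomial.mem_support_iff.mpr hc)) (by omega)

lemma degreeOf_le_of_coeff {p : MvPolynomial (Fin 2) ℝ} {v : Fin 2} {kk : ℕ}
    (h : ∀ m : Fin 2 →₀ ℕ, kk < m v → coeff m p = 0) : degreeOf v p ≤ kk :=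
  degreeOf_le_iff.mpr fun m hm =>
    le_of_not_gt fun hlt => (MvPolynomial.mem_support_iff.mp hm) (h m hlt)

lemma pderiv_pderiv_comm (f : MvPolynomial (Fin 2) ℝ) :
    pderiv 0 (pderiv 1 f) = pderiv 1 (pderiv 0 f) := by
  induction f using MvPolynomial.induction_on' with
  | add p q hp hq => simp [hp, hq]
  | monomial d c =>
    rw [pderiv_monomial, pderiv_monomial, pderiv_monomial, pderiv_monomial]
    have h1 : ((d - Finsupp.single 1 1 : Fin 2 →₀ ℕ)) 0 = d 0 := by
      rw [Finsupp.tsub_apply, Finsupp.single_eq_of_ne (by decide), tsub_zero]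
    have h2 : ((d - Finsupp.single 0 1 : Fin 2 →₀ ℕ)) 1 = d 1 := by
      rw [Finsupp.tsub_apply, Finsupp.single_eq_of_ne (by decide), tsub_zero]
    rw [h1, h2, tsub_right_comm]
    congr 1
    ring

noncomputable def intg (i : Fin 2) (p : MvPolynomial (Fin 2) ℝ) : MvPolynomial (Fin 2) ℝ :=
  (AddMonoidAlgebra.coeff p).sum fun d c => monomial (d + Finsupp.single i 1) (c / (d i + 1))

lemma intg_monomial (i : Fin 2) (d : Fin 2 →₀ ℕ) (c : ℝ) :
    intg i (monomial d c) = monomial (d + Finsupp.single i 1) (c / (d i + 1)) := by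
  unfold intg
  rw [MvPolynomial.sum_monomial_eq]
  simp

lemma intg_zero (i : Fin 2) : intg i 0 = 0 := by
  simp [intg]

lemma intg_add (i : Fin 2) (p q : MvPolynomial (Fin 2) ℝ) :
    intg i (p + q) = intg i p + intg i q := by
  unfold intg
  rw [show AddMonoidAlgebra.coeff (p + q) = AddMonoidAlgebra.coeff p + AddMonoidAlgebra.coeff q from rfl]
  exact Finsupp.sum_add_index' (fun a => by simp) (fun a b₁ b₂ => by rw [add_div, map_add])

lemma pderiv_intg (i : Fin 2) (p : MvPolynomial (Fin 2) ℝ) :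
    pderiv i (intg i p) = p := by
  induction p using MvPolynomial.induction_on' with
  | add p q hp hq => rw [intg_add, map_add, hp, hq]
  | monomial d c =>
    rw [intg_monomial, pderiv_monomial]
    have h1 : d + Finsupp.single i 1 - Finsupp.single i 1 = d := by
      exact add_tsub_cancel_right _ _
    have h2 : ((d + Finsupp.single i 1 : Fin 2 →₀ ℕ)) i = d i + 1 := by
      rw [Finsupp.add_apply, Finsupp.single_eq_same]
    rw [h1, h2]
    congr 1
    push_cast
    field_simp

lemma pderiv_intg_comm {i j : Fin 2} (h : j ≠ i) (p : MvPolynomial (Fin 2) ℝ) :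
    pderiv j (intg i p) = intg i (pderiv j p) := by
  induction p using MvPolynomial.induction_on' with
  | add p q hp hq => rw [intg_add, map_add, map_add, hp, hq, intg_add]
  | monomial d c =>
    rw [intg_monomial, pderiv_monomial, pderiv_monomial, intg_monomial]
    have h1 : ((d + Finsupp.single i 1 : Fin 2 →₀ ℕ)) j = d j := by
      rw [Finsupp.add_apply, Finsupp.single_eq_of_ne h, add_zero]
    have h2 : ((d - Finsupp.single j 1 : Fin 2 →₀ ℕ)) i = d i := by
      rw [Finsupp.tsub_apply, Finsupp.single_eq_of_ne h.symm, tsub_zero]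
    have h3 : d + Finsupp.single i 1 - Finsupp.single j 1
        = d - Finsupp.single j 1 + Finsupp.single i 1 := by
      ext a
      simp only [Finsupp.add_apply, Finsupp.tsub_apply, Finsupp.single_apply]
      have : ¬(i = a ∧ j = a) := fun ⟨e1, e2⟩ => h (e2.trans e1.symm)
      split_ifs <;> omega
    rw [h1, h2, h3]
    congr 1
    ring

lemma mono1 (c : ℝ) (n : ℕ) :
    C c * (X 0 : MvPolynomial (Fin 2) ℝ) ^ n = monomial (D n 0) c := by
  rw [C_mul_X_pow_eq_monomial]
  congr 1
  rw [D, Finsupp.single_zero, add_zero]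

lemma mono2 (c : ℝ) (n : ℕ) :
    C c * (X 0 : MvPolynomial (Fin 2) ℝ) ^ n * X 1 = monomial (D n 1) c := by
  rw [C_mul_X_pow_eq_monomial, ← pow_one (X 1 : MvPolynomial (Fin 2) ℝ),
    X_pow_eq_monomial, monomial_mul, mul_one, D]

lemma mono4 (c : ℝ) (n : ℕ) :
    C c * (X 1 : MvPolynomial (Fin 2) ℝ) ^ n = monomial (D 0 n) c := by
  rw [C_mul_X_pow_eq_monomial]
  congr 1
  rw [D, Finsupp.single_zero, zero_add]

lemma mono5 (c : ℝ) (n : ℕ) :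
    C c * (X 0 : MvPolynomial (Fin 2) ℝ) * X 1 ^ n = monomial (D 1 n) c := by
  rw [← pow_one (X 0 : MvPolynomial (Fin 2) ℝ), C_mul_X_pow_eq_monomial,
    X_pow_eq_monomial, monomial_mul, mul_one, D]

/-- On the unit square, for `k ≥ 1`, the space of divergence-free symmetric tensor
fields in `Q_k(K;S)` (entries of degree `≤ k` in each variable separately) equals
`J(Φ)` where `Φ = P_{k,k} ⊕ span{x^{k+1}, x^{k+1}y, x^{k+2}, y^{k+1}, x y^{k+1}, y^{k+2}}`
and `J` is the Airy stress operator. -/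
theorem divfree_Qk_symmetric_eq_airy_image
    (k : ℕ) (hk : 1 ≤ k) :
    {τ : Matrix (Fin 2) (Fin 2) (MvPolynomial (Fin 2) ℝ) |
        τ.IsSymm ∧ (∀ i j, (τ i j).degreeOf 0 ≤ k ∧ (τ i j).degreeOf 1 ≤ k) ∧
        (∀ i, ∑ j, pderiv j (τ i j) = 0)}
    = {τ : Matrix (Fin 2) (Fin 2) (MvPolynomial (Fin 2) ℝ) |
        ∃ φ : MvPolynomial (Fin 2) ℝ,
          (∃ (ψ : MvPolynomial (Fin 2) ℝ) (c₁ c₂ c₃ c₄ c₅ c₆ : ℝ),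
            ψ.degreeOf 0 ≤ k ∧ ψ.degreeOf 1 ≤ k ∧
            φ = ψ + C c₁ * X 0 ^ (k + 1) + C c₂ * X 0 ^ (k + 1) * X 1
              + C c₃ * X 0 ^ (k + 2) + C c₄ * X 1 ^ (k + 1)
              + C c₅ * X 0 * X 1 ^ (k + 1) + C c₆ * X 1 ^ (k + 2)) ∧
          τ = !![pderiv 1 (pderiv 1 φ), -(pderiv 0 (pderiv 1 φ));
                 -(pderiv 0 (pderiv 1 φ)), pderiv 0 (pderiv 0 φ)]} := by
  have resolve : ∀ A B CC : ℝ, A ≠ 0 → B ≠ 0 → A * (B * CC) = 0 → CC = 0 := by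
    intro A B CC hA hB h
    rcases mul_eq_zero.mp h with h | h
    · exact absurd h hA
    rcases mul_eq_zero.mp h with h | h
    · exact absurd h hB
    · exact h
  ext τ
  simp only [Set.mem_setOf_eq]
  constructor
  · rintro ⟨hsym, hdeg, hdiv⟩
    set a := τ 0 0 with ha
    set b := τ 0 1 with hb
    set c := τ 1 1 with hc
    have hba : τ 1 0 = b := hsym.apply 0 1
    have hdiv0 : pderiv 0 a + pderiv 1 b = 0 := by
      have h := hdiv 0; rwa [Fin.sum_univ_two] at h
    have hdiv1 : pderiv 0 b + pderiv 1 c = 0 := by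
      have h := hdiv 1; rwa [Fin.sum_univ_two, hba] at h
    have h01 : (0 : Fin 2) ≠ 1 := by decide
    have h10 : (1 : Fin 2) ≠ 0 := by decide
    set q' := -b - pderiv 0 (intg 1 a) with hq'def
    set s := intg 1 a + intg 0 q' with hsdef
    set q := -b - pderiv 1 (intg 0 c) with hqdef
    set p := intg 0 c + intg 1 q with hpdef
    set r := s - pderiv 1 (intg 0 p) with hrdef
    set φ := intg 0 p + intg 1 r with hφdef
    have hq'1 : pderiv 1 q' = 0 := by
      rw [hq'def, map_sub, map_neg, pderiv_intg_comm h01, pderiv_intg]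
      linear_combination -hdiv0
    have hs1 : pderiv 1 s = a := by
      rw [hsdef, map_add, pderiv_intg, pderiv_intg_comm h10, hq'1, intg_zero, add_zero]
    have hs0 : pderiv 0 s = -b := by
      rw [hsdef, map_add, pderiv_intg, hq'def]
      ring
    have hq0 : pderiv 0 q = 0 := by
      rw [hqdef, map_sub, map_neg, pderiv_intg_comm h10, pderiv_intg]
      linear_combination -hdiv1
    have hp0 : pderiv 0 p = c := by
      rw [hpdef, map_add, pderiv_intg, pderiv_intg_comm h01, hq0, intg_zero, add_zero]
    have hp1 : pderiv 1 p = -b := by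
      rw [hpdef, map_add, pderiv_intg, hqdef]
      ring
    have hr0 : pderiv 0 r = 0 := by
      rw [hrdef, map_sub, hs0, pderiv_intg_comm h10, pderiv_intg, hp1]
      ring
    have hφ0 : pderiv 0 φ = p := by
      rw [hφdef, map_add, pderiv_intg, pderiv_intg_comm h01, hr0, intg_zero, add_zero]
    have hφ1 : pderiv 1 φ = s := by
      rw [hφdef, map_add, pderiv_intg, hrdef]
      ring
    have hyy : pderiv 1 (pderiv 1 φ) = a := by rw [hφ1, hs1]
    have hxy : pderiv 0 (pderiv 1 φ) = -b := by rw [hφ1, hs0]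
    have hxx : pderiv 0 (pderiv 0 φ) = c := by rw [hφ0, hp0]
    -- vanishing of high coefficients of φ
    have hcA : ∀ i j : ℕ, (k < i ∨ k < j) → coeff (D i (j + 2)) φ = 0 := by
      intro i j hij
      have h0 : coeff (D i j) a = 0 := by
        rcases hij with h | h
        · exact coeff_eq_zero_of_degreeOf_le (hdeg 0 0).1 (by rw [D_apply0]; exact h)
        · exact coeff_eq_zero_of_degreeOf_le (hdeg 0 0).2 (by rw [D_apply1]; exact h)
      rw [← hyy, coeff_D_pderiv1, coeff_D_pderiv1] at h0
      exact resolve _ _ _ (by positivity) (by positivity) h0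
    have hcB : ∀ i j : ℕ, (k < i ∨ k < j) → coeff (D (i + 1) (j + 1)) φ = 0 := by
      intro i j hij
      have h0 : coeff (D i j) b = 0 := by
        rcases hij with h | h
        · exact coeff_eq_zero_of_degreeOf_le (hdeg 0 1).1 (by rw [D_apply0]; exact h)
        · exact coeff_eq_zero_of_degreeOf_le (hdeg 0 1).2 (by rw [D_apply1]; exact h)
      have h1 : coeff (D i j) (pderiv 0 (pderiv 1 φ)) = 0 := by
        rw [hxy, coeff_neg, h0, neg_zero]
      rw [coeff_D_pderiv0, coeff_D_pderiv1] at h1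
      exact resolve _ _ _ (by positivity) (by positivity) h1
    have hcC : ∀ i j : ℕ, (k < i ∨ k < j) → coeff (D (i + 2) j) φ = 0 := by
      intro i j hij
      have h0 : coeff (D i j) c = 0 := by
        rcases hij with h | h
        · exact coeff_eq_zero_of_degreeOf_le (hdeg 1 1).1 (by rw [D_apply0]; exact h)
        · exact coeff_eq_zero_of_degreeOf_le (hdeg 1 1).2 (by rw [D_apply1]; exact h)
      rw [← hxx, coeff_D_pderiv0, coeff_D_pderiv0] at h0
      exact resolve _ _ _ (by positivity) (by positivity) h0
    set c1 := coeff (D (k + 1) 0) φ with hc1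
    set c2 := coeff (D (k + 1) 1) φ with hc2
    set c3 := coeff (D (k + 2) 0) φ with hc3
    set c4 := coeff (D 0 (k + 1)) φ with hc4
    set c5 := coeff (D 1 (k + 1)) φ with hc5
    set c6 := coeff (D 0 (k + 2)) φ with hc6
    set Ψ := φ - (monomial (D (k + 1) 0) c1 + monomial (D (k + 1) 1) c2
      + monomial (D (k + 2) 0) c3 + monomial (D 0 (k + 1)) c4
      + monomial (D 1 (k + 1)) c5 + monomial (D 0 (k + 2)) c6) with hΨdef
    have hΨcoeff : ∀ i j : ℕ, coeff (D i j) Ψ = coeff (D i j) φ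
        - ((if k + 1 = i ∧ 0 = j then c1 else 0) + (if k + 1 = i ∧ 1 = j then c2 else 0)
        + (if k + 2 = i ∧ 0 = j then c3 else 0) + (if 0 = i ∧ k + 1 = j then c4 else 0)
        + (if 1 = i ∧ k + 1 = j then c5 else 0) + (if 0 = i ∧ k + 2 = j then c6 else 0)) := by
      intro i j
      rw [hΨdef]
      simp only [coeff_sub, coeff_add, coeff_monomial, D_inj]
    have hΨ0 : ∀ i j : ℕ, k < i → coeff (D i j) Ψ = 0 := by
      intro i j hi
      rw [hΨcoeff]
      match j with
      | 0 =>
        rcases eq_or_ne i (k + 1) with rfl | h1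
        · rw [if_pos (by omega), if_neg (by omega), if_neg (by omega), if_neg (by omega),
            if_neg (by omega), if_neg (by omega)]
          ring
        rcases eq_or_ne i (k + 2) with rfl | h2
        · rw [if_neg (by omega), if_neg (by omega), if_pos (by omega), if_neg (by omega),
            if_neg (by omega), if_neg (by omega)]
          ring
        · obtain ⟨i', rfl⟩ : ∃ i', i = i' + 2 := ⟨i - 2, by omega⟩
          rw [if_neg (by omega), if_neg (by omega), if_neg (by omega), if_neg (by omega),
            if_neg (by omega), if_neg (by omega), hcC i' 0 (by omega)]
          ring
      | 1 =>
        rcases eq_or_ne i (k + 1) with rfl | h1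
        · rw [if_neg (by omega), if_pos (by omega), if_neg (by omega), if_neg (by omega),
            if_neg (by omega), if_neg (by omega)]
          ring
        · obtain ⟨i', rfl⟩ : ∃ i', i = i' + 1 := ⟨i - 1, by omega⟩
          rw [if_neg (by omega), if_neg (by omega), if_neg (by omega), if_neg (by omega),
            if_neg (by omega), if_neg (by omega), hcB i' 0 (by omega)]
          ring
      | (j' + 2) =>
        rw [if_neg (by omega), if_neg (by omega), if_neg (by omega), if_neg (by omega),
          if_neg (by omega), if_neg (by omega), hcA i j' (by omega)]
        ring
    have hΨ1 : ∀ i j : ℕ, k < j → coeff (D i j) Ψ = 0 := by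
      intro i j hj
      rw [hΨcoeff]
      match i with
      | 0 =>
        rcases eq_or_ne j (k + 1) with rfl | h1
        · rw [if_neg (by omega), if_neg (by omega), if_neg (by omega), if_pos (by omega),
            if_neg (by omega), if_neg (by omega)]
          ring
        rcases eq_or_ne j (k + 2) with rfl | h2
        · rw [if_neg (by omega), if_neg (by omega), if_neg (by omega), if_neg (by omega),
            if_neg (by omega), if_pos (by omega)]
          ring
        · obtain ⟨j', rfl⟩ : ∃ j', j = j' + 2 := ⟨j - 2, by omega⟩
          rw [if_neg (by omega), if_neg (by omega), if_neg (by omega), if_neg (by omega),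
            if_neg (by omega), if_neg (by omega), hcA 0 j' (by omega)]
          ring
      | 1 =>
        rcases eq_or_ne j (k + 1) with rfl | h1
        · rw [if_neg (by omega), if_neg (by omega), if_neg (by omega), if_neg (by omega),
            if_pos (by omega), if_neg (by omega)]
          ring
        · obtain ⟨j', rfl⟩ : ∃ j', j = j' + 1 := ⟨j - 1, by omega⟩
          rw [if_neg (by omega), if_neg (by omega), if_neg (by omega), if_neg (by omega),
            if_neg (by omega), if_neg (by omega), hcB 0 j' (by omega)]
          ring
      | (i' + 2) =>
        rw [if_neg (by omega), if_neg (by omega), if_neg (by omega), if_neg (by omega),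
          if_neg (by omega), if_neg (by omega), hcC i' j (by omega)]
        ring
    refine ⟨φ, ⟨Ψ, c1, c2, c3, c4, c5, c6, ?_, ?_, ?_⟩, ?_⟩
    · exact degreeOf_le_of_coeff fun m hm => by rw [D_repr m]; exact hΨ0 _ _ hm
    · exact degreeOf_le_of_coeff fun m hm => by rw [D_repr m]; exact hΨ1 _ _ hm
    · rw [mono1, mono2, mono1, mono4, mono5, mono4, hΨdef]
      ring
    · rw [hyy, hxy, hxx, neg_neg]
      have h1 := Matrix.eta_fin_two τ
      rw [hba, ← ha, ← hb, ← hc] at h1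
      exact h1
  · rintro ⟨φ, ⟨ψ, c1, c2, c3, c4, c5, c6, hψ0, hψ1, hφeq⟩, rfl⟩
    have hφc : ∀ i j : ℕ, coeff (D i j) φ = coeff (D i j) ψ
        + ((if k + 1 = i ∧ 0 = j then c1 else 0) + (if k + 1 = i ∧ 1 = j then c2 else 0)
        + (if k + 2 = i ∧ 0 = j then c3 else 0) + (if 0 = i ∧ k + 1 = j then c4 else 0)
        + (if 1 = i ∧ k + 1 = j then c5 else 0) + (if 0 = i ∧ k + 2 = j then c6 else 0)) := by
      intro i j
      rw [hφeq, mono1, mono2, mono1, mono4, mono5, mono4]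
      simp only [coeff_add, coeff_monomial, D_inj]
      ring
    have hE1 : ∀ i j : ℕ, (k < i ∨ k < j) → coeff (D i j) (pderiv 1 (pderiv 1 φ)) = 0 := by
      intro i j hij
      rw [coeff_D_pderiv1, coeff_D_pderiv1, hφc]
      have hψz : coeff (D i (j + 1 + 1)) ψ = 0 := by
        rcases hij with h | h
        · exact coeff_eq_zero_of_degreeOf_le hψ0 (by rw [D_apply0]; exact h)
        · exact coeff_eq_zero_of_degreeOf_le hψ1 (by rw [D_apply1]; omega)
      rw [hψz, if_neg (by omega), if_neg (by omega), if_neg (by omega), if_neg (by omega),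
        if_neg (by omega), if_neg (by omega)]
      ring
    have hE2 : ∀ i j : ℕ, (k < i ∨ k < j) → coeff (D i j) (pderiv 0 (pderiv 1 φ)) = 0 := by
      intro i j hij
      rw [coeff_D_pderiv0, coeff_D_pderiv1, hφc]
      have hψz : coeff (D (i + 1) (j + 1)) ψ = 0 := by
        rcases hij with h | h
        · exact coeff_eq_zero_of_degreeOf_le hψ0 (by rw [D_apply0]; omega)
        · exact coeff_eq_zero_of_degreeOf_le hψ1 (by rw [D_apply1]; omega)
      rw [hψz, if_neg (by omega), if_neg (by omega), if_neg (by omega), if_neg (by omega),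
        if_neg (by omega), if_neg (by omega)]
      ring
    have hE3 : ∀ i j : ℕ, (k < i ∨ k < j) → coeff (D i j) (pderiv 0 (pderiv 0 φ)) = 0 := by
      intro i j hij
      rw [coeff_D_pderiv0, coeff_D_pderiv0, hφc]
      have hψz : coeff (D (i + 1 + 1) j) ψ = 0 := by
        rcases hij with h | h
        · exact coeff_eq_zero_of_degreeOf_le hψ0 (by rw [D_apply0]; omega)
        · exact coeff_eq_zero_of_degreeOf_le hψ1 (by rw [D_apply1]; exact h)
      rw [hψz, if_neg (by omega), if_neg (by omega), if_neg (by omega), if_neg (by omega),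
        if_neg (by omega), if_neg (by omega)]
      ring
    refine ⟨?_, ?_, ?_⟩
    · ext i j
      fin_cases i <;> fin_cases j <;> rfl
    · intro i j
      fin_cases i <;> fin_cases j
      · exact ⟨degreeOf_le_of_coeff fun m hm => by rw [D_repr m]; exact hE1 _ _ (Or.inl hm),
          degreeOf_le_of_coeff fun m hm => by rw [D_repr m]; exact hE1 _ _ (Or.inr hm)⟩
      · constructor
        · apply degreeOf_le_of_coeff
          intro m hm
          show coeff m (-(pderiv 0 (pderiv 1 φ))) = 0
          rw [coeff_neg, neg_eq_zero, D_repr m]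
          exact hE2 _ _ (Or.inl hm)
        · apply degreeOf_le_of_coeff
          intro m hm
          show coeff m (-(pderiv 0 (pderiv 1 φ))) = 0
          rw [coeff_neg, neg_eq_zero, D_repr m]
          exact hE2 _ _ (Or.inr hm)
      · constructor
        · apply degreeOf_le_of_coeff
          intro m hm
          show coeff m (-(pderiv 0 (pderiv 1 φ))) = 0
          rw [coeff_neg, neg_eq_zero, D_repr m]
          exact hE2 _ _ (Or.inl hm)
        · apply degreeOf_le_of_coeff
          intro m hm
          show coeff m (-(pderiv 0 (pderiv 1 φ))) = 0
          rw [coeff_neg, neg_eq_zero, D_repr m]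
          exact hE2 _ _ (Or.inr hm)
      · exact ⟨degreeOf_le_of_coeff fun m hm => by rw [D_repr m]; exact hE3 _ _ (Or.inl hm),
          degreeOf_le_of_coeff fun m hm => by rw [D_repr m]; exact hE3 _ _ (Or.inr hm)⟩
    · intro i
      fin_cases i <;> rw [Fin.sum_univ_two]
      · show pderiv 0 (pderiv 1 (pderiv 1 φ)) + pderiv 1 (-(pderiv 0 (pderiv 1 φ))) = 0
        rw [map_neg]
        linear_combination pderiv_pderiv_comm (pderiv 1 φ)
      · show pderiv 0 (-(pderiv 0 (pderiv 1 φ))) + pderiv 1 (pderiv 0 (pderiv 0 φ)) = 0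
        rw [map_neg]
        have h3 : pderiv 0 (pderiv 0 (pderiv 1 φ)) = pderiv 0 (pderiv 1 (pderiv 0 φ)) := by
          rw [pderiv_pderiv_comm φ]
        linear_combination -h3 - pderiv_pderiv_comm (pderiv 0 φ)
end

section
/- Suppose Σ and V are finite-dimensional spaces on a Lipschitz domain K with ε(V) ⊂ Σ, ∇·Σ ⊂ V, and tr(Σ×V) ⊂ M, where tr(τ,v) = (τn+v)|_{∂K}. Set Ṽ := ∇·Σ. Then the restriction of the trace v ↦ v|_{∂K} to Ṽ^⊥ (the L²(K)-orthogonal complement of ∇·Σ in V) is injective. -/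
open MeasureTheory
open Set Topology

/-- Row-wise divergence of a matrix-valued field on `ℝⁿ`. -/
noncomputable def matDiv (d : ℕ) (τ : (Fin d → ℝ) → Matrix (Fin d) (Fin d) ℝ) :
    (Fin d → ℝ) → (Fin d → ℝ) :=
  fun x i => ∑ j, fderiv ℝ (fun y => τ y i j) x (Pi.single j 1)

/-- Symmetric gradient `ε(v) = ½(∇v + ∇vᵀ)` of a vector field on `ℝⁿ`. -/
noncomputable def symGrad (d : ℕ) (v : (Fin d → ℝ) → (Fin d → ℝ)) :
    (Fin d → ℝ) → Matrix (Fin d) (Fin d) ℝ :=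
  fun x => Matrix.of fun i j =>
    (fderiv ℝ (fun y => v y i) x (Pi.single j 1) +
      fderiv ℝ (fun y => v y j) x (Pi.single i 1)) / 2

/-- `L²(K)` inner product of vector fields. -/
noncomputable def dotK (d : ℕ) (K : Set (Fin d → ℝ))
    (f g : (Fin d → ℝ) → (Fin d → ℝ)) : ℝ :=
  ∫ x in K, ∑ i, f x i * g x i

/-- `L²(K)` (Frobenius) inner product of matrix fields. -/
noncomputable def frobK (d : ℕ) (K : Set (Fin d → ℝ))
    (σ τ : (Fin d → ℝ) → Matrix (Fin d) (Fin d) ℝ) : ℝ :=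
  ∫ x in K, ∑ i, ∑ j, σ x i j * τ x i j

lemma bound_fderiv_on_open {E : Type*} [NormedAddCommGroup E] [NormedSpace ℝ E]
    {g : E → ℝ} {K : Set E} (hKo : IsOpen K) (hcpt : IsCompact (closure K))
    (hg : ContDiffOn ℝ 1 g (closure K)) :
    ∃ C : ℝ, ∀ x ∈ K, ‖fderiv ℝ g x‖ ≤ C := by
  have claim : ∀ x : E, ∃ (O : Set E) (C : ℝ), IsOpen O ∧ (x ∈ closure K → x ∈ O) ∧
      ∀ y ∈ K ∩ O, ‖fderiv ℝ g y‖ ≤ C := by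
    intro x
    by_cases hx : x ∈ closure K
    · have h1 : ContDiffWithinAt ℝ (0 + 1) g (closure K) x := by
        norm_num; exact hg x hx
      rw [contDiffWithinAt_succ_iff_hasFDerivWithinAt (by norm_num)] at h1
      obtain ⟨u, hu, -, f', hf', hf'0⟩ := h1
      rw [insert_eq_of_mem hx] at hu
      obtain ⟨o, ho, hxo, hou⟩ := mem_nhdsWithin.mp hu
      have hcw : ContinuousWithinAt f' u x := hf'0.continuousWithinAt
      have hev : ∀ᶠ y in 𝓝[u] x, ‖f' y‖ < ‖f' x‖ + 1 := by
        have : {L : E →L[ℝ] ℝ | ‖L‖ < ‖f' x‖ + 1} ∈ 𝓝 (f' x) := by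
          apply IsOpen.mem_nhds
          · exact isOpen_lt continuous_norm continuous_const
          · simp
        exact hcw this
      obtain ⟨o₂, ho₂, hxo₂, ho₂u⟩ := mem_nhdsWithin.mp hev
      refine ⟨o ∩ o₂, ‖f' x‖ + 1, ho.inter ho₂, fun _ => ⟨hxo, hxo₂⟩, ?_⟩
      rintro y ⟨hyK, hyo, hyo₂⟩
      have hyu : y ∈ u := hou ⟨hyo, subset_closure hyK⟩
      have hbd : ‖f' y‖ < ‖f' x‖ + 1 := ho₂u ⟨hyo₂, hyu⟩
      have hder : HasFDerivAt g (f' y) y := by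
        have h2 := (hf' y hyu).mono
          (show K ∩ o ⊆ u from fun z hz => hou ⟨hz.2, subset_closure hz.1⟩)
        exact h2.hasFDerivAt ((hKo.inter ho).mem_nhds ⟨hyK, hyo⟩)
      rw [hder.fderiv]
      exact hbd.le
    · exact ⟨∅, 0, isOpen_empty, fun h => absurd h hx, fun y hy => absurd hy.2 (notMem_empty y)⟩
  choose O C hOopen hmem hbd using claim
  obtain ⟨b, hbsub, hbfin, hcov⟩ := hcpt.elim_finite_subcover_image
    (fun x (_ : x ∈ closure K) => hOopen x) (fun x hx => mem_biUnion hx (hmem x hx))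
  obtain ⟨B, hB⟩ := (hbfin.image C).bddAbove
  refine ⟨B, fun y hy => ?_⟩
  obtain ⟨x, hxb, hyO⟩ := mem_iUnion₂.mp (hcov (subset_closure hy))
  exact le_trans (hbd x y ⟨hy, hyO⟩) (hB (mem_image_of_mem C hxb))

lemma zero_of_integral_zero {d : ℕ} {K : Set (Fin d → ℝ)} (hKo : IsOpen K)
    (hvol : volume K < ⊤) {f : (Fin d → ℝ) → ℝ} (hcont : ContinuousOn f K)
    (hnn : ∀ x ∈ K, 0 ≤ f x) (hbd : ∃ B, ∀ x ∈ K, |f x| ≤ B)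
    (hint : ∫ x in K, f x = 0) : ∀ x ∈ K, f x = 0 := by
  obtain ⟨B, hB⟩ := hbd
  have hmeas := hKo.measurableSet
  have hfm : AEStronglyMeasurable f (volume.restrict K) := hcont.aestronglyMeasurable hmeas
  have hintg : IntegrableOn f K := by
    refine Integrable.mono' ((integrableOn_const_iff (C := B)).mpr (Or.inr hvol)) hfm ?_
    exact (ae_restrict_iff' hmeas).mpr (Filter.Eventually.of_forall fun x hx => by
      simpa using hB x hx)
  have h1 : 0 ≤ᵐ[volume.restrict K] f :=
    (ae_restrict_iff' hmeas).mpr (Filter.Eventually.of_forall hnn)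
  have hae : f =ᵐ[volume.restrict K] 0 :=
    (integral_eq_zero_iff_of_nonneg_ae h1 hintg).mp hint
  intro x hx
  by_contra hne
  have hpos : 0 < f x := lt_of_le_of_ne (hnn x hx) (Ne.symm hne)
  have hca : ContinuousAt f x := hcont.continuousAt (hKo.mem_nhds hx)
  have hev : f ⁻¹' Ioi 0 ∈ 𝓝 x := hca (isOpen_Ioi.mem_nhds hpos)
  obtain ⟨o, hoe, hoo, hxo⟩ := mem_nhds_iff.mp hev
  have h0 : volume.restrict K {y | f y ≠ 0} = 0 := by
    have := hae
    rw [Filter.EventuallyEq, ae_iff] at this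
    simpa using this
  have hsub : o ∩ K ⊆ {y | f y ≠ 0} := fun y hy => ne_of_gt (hoe hy.1)
  have hz : volume.restrict K (o ∩ K) = 0 := measure_mono_null hsub h0
  rw [Measure.restrict_apply (hoo.inter hKo).measurableSet,
    inter_eq_left.mpr inter_subset_right] at hz
  exact absurd hz ((hoo.inter hKo).measure_pos volume ⟨x, hxo, hx⟩).ne'

/-- Let `K ⊆ ℝⁿ` be a bounded Lipschitz connected domain and let `Σ`, `V` be
finite-dimensional spaces of symmetric tensor fields resp. vector fields on `K`
with `ε(V) ⊆ Σ`, `∇·Σ ⊆ V` and `tr(Σ×V) ⊆ M`, where `tr(τ,v) = (τn+v)|_{∂K}`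
(the Gauss–Green identity being assumed on `K`).  With `Ṽ := ∇·Σ`, the restriction
of the boundary trace `v ↦ v|_{∂K}` to `Ṽ^⊥` (the `L²(K)`-orthogonal complement of
`∇·Σ` in `V`) is injective: if `v ∈ V` is `L²(K)`-orthogonal to `∇·Σ` and
`v|_{∂K} = 0`, then `v = 0` on `K̄`. -/
theorem trace_injective_on_Vtilde_perp
    (d : ℕ) (K : Set (Fin d → ℝ)) (hKo : IsOpen K)
    (hKb : Bornology.IsBounded K) (hKc : IsConnected K)
    (nrm : ↥(frontier K) → (Fin d → ℝ)) (hnrm : ∀ x, ‖nrm x‖ = 1)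
    (σb : Measure ↥(frontier K))
    (Sg : Submodule ℝ ((Fin d → ℝ) → Matrix (Fin d) (Fin d) ℝ))
    (V : Submodule ℝ ((Fin d → ℝ) → (Fin d → ℝ)))
    (M : Submodule ℝ (↥(frontier K) → (Fin d → ℝ)))
    [FiniteDimensional ℝ ↥Sg] [FiniteDimensional ℝ ↥V] [FiniteDimensional ℝ ↥M]
    (hsym : ∀ τ ∈ Sg, ∀ x, (τ x).IsSymm)
    (hregτ : ∀ τ ∈ Sg, ∀ i j, ContDiffOn ℝ 1 (fun y => τ y i j) (closure K))
    (hregv : ∀ v ∈ V, ∀ i, ContDiffOn ℝ 1 (fun y => v y i) (closure K))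
    (hεV : ∀ v ∈ V, symGrad d v ∈ Sg)
    (hdivS : ∀ τ ∈ Sg, matDiv d τ ∈ V)
    (htrM : ∀ τ ∈ Sg, ∀ v ∈ V,
      (fun x : ↥(frontier K) =>
        (τ (x : Fin d → ℝ)).mulVec (nrm x) + v (x : Fin d → ℝ)) ∈ M)
    (hGG : ∀ τ ∈ Sg, ∀ v ∈ V,
      (∫ x, ∑ i, (τ (x : Fin d → ℝ)).mulVec (nrm x) i * v (x : Fin d → ℝ) i ∂σb)
        = frobK d K τ (symGrad d v) + dotK d K (matDiv d τ) v) :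
    ∀ v ∈ V, (∀ τ ∈ Sg, dotK d K v (matDiv d τ) = 0) →
      (∀ x : ↥(frontier K), v (x : Fin d → ℝ) = 0) →
      ∀ x ∈ closure K, v x = 0 := by
  intro v hv hperp hbdry
  have hτ : symGrad d v ∈ Sg := hεV v hv
  -- Step 1: the Gauss-Green identity gives `∫_K |ε(v)|² = 0`.
  have hGG' := hGG (symGrad d v) hτ v hv
  have hlhs : (∫ x, ∑ i, ((symGrad d v) (x : Fin d → ℝ)).mulVec (nrm x) i
      * v (x : Fin d → ℝ) i ∂σb) = 0 := by
    have hzero : (fun x : ↥(frontier K) => ∑ i, ((symGrad d v) (x : Fin d → ℝ)).mulVec (nrm x) i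
        * v (x : Fin d → ℝ) i) = fun _ => (0 : ℝ) := by
      funext x
      refine Finset.sum_eq_zero fun i _ => ?_
      rw [show v (x : Fin d → ℝ) i = 0 from by rw [hbdry x]; rfl, mul_zero]
    rw [hzero, integral_zero]
  have hdot : dotK d K (matDiv d (symGrad d v)) v = 0 := by
    have h1 : dotK d K (matDiv d (symGrad d v)) v = dotK d K v (matDiv d (symGrad d v)) := by
      unfold dotK
      congr 1
      funext x
      exact Finset.sum_congr rfl fun i _ => mul_comm _ _
    rw [h1]
    exact hperp (symGrad d v) hτ
  rw [hlhs, hdot, add_zero] at hGG'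
  -- hGG' : 0 = frobK d K (symGrad d v) (symGrad d v)
  -- Step 2: pointwise vanishing of ε(v) on K.
  have hcl : IsCompact (closure K) := hKb.isCompact_closure
  have hbnd : ∀ i : Fin d, ∃ C, ∀ x ∈ K, ‖fderiv ℝ (fun y => v y i) x‖ ≤ C := fun i =>
    bound_fderiv_on_open hKo hcl (hregv v hv i)
  choose C hC using hbnd
  obtain ⟨B, hB⟩ := (Set.finite_range C).bddAbove
  have hBmem : ∀ i, C i ≤ B := fun i => hB (mem_range_self i)
  have hfder_bd : ∀ x ∈ K, ∀ i j, |fderiv ℝ (fun y => v y i) x (Pi.single j 1)| ≤ B := by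
    intro x hx i j
    calc |fderiv ℝ (fun y => v y i) x (Pi.single j 1)|
        ≤ ‖fderiv ℝ (fun y => v y i) x‖ * ‖(Pi.single j 1 : Fin d → ℝ)‖ :=
          (fderiv ℝ (fun y => v y i) x).le_opNorm _
      _ = ‖fderiv ℝ (fun y => v y i) x‖ := by rw [Pi.norm_single]; simp
      _ ≤ C i := hC i x hx
      _ ≤ B := hBmem i
  have hτbd : ∀ x ∈ K, ∀ i j, |symGrad d v x i j| ≤ B := by
    intro x hx i j
    have h1 := hfder_bd x hx i j
    have h2 := hfder_bd x hx j i
    have : symGrad d v x i j = (fderiv ℝ (fun y => v y i) x (Pi.single j 1) +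
        fderiv ℝ (fun y => v y j) x (Pi.single i 1)) / 2 := rfl
    rw [this]
    rw [abs_div]
    have := abs_add_le (fderiv ℝ (fun y => v y i) x (Pi.single j 1))
      (fderiv ℝ (fun y => v y j) x (Pi.single i 1))
    simp only [abs_two]
    linarith
  -- continuity of ε(v) on K
  have hτcont : ∀ i j, ContinuousOn (fun x => symGrad d v x i j) K := by
    intro i j
    have hci : ∀ (k : Fin d) (l : Fin d),
        ContinuousOn (fun x => fderiv ℝ (fun y => v y k) x (Pi.single l 1)) K := by
      intro k l
      have h1 : ContinuousOn (fun x => fderiv ℝ (fun y => v y k) x) K :=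
        ((hregv v hv k).mono subset_closure).continuousOn_fderiv_of_isOpen hKo le_rfl
      exact h1.clm_apply continuousOn_const
    exact (((hci i j).add (hci j i)).div_const 2)
  have hε0 : ∀ p ∈ K, ∀ i j, symGrad d v p i j = 0 := by
    have hint : ∫ x in K, (∑ i, ∑ j, symGrad d v x i j * symGrad d v x i j) = 0 :=
      hGG'.symm
    have hf0 : ∀ x ∈ K, (∑ i, ∑ j, symGrad d v x i j * symGrad d v x i j) = 0 := by
      refine zero_of_integral_zero hKo hKb.measure_lt_top ?_ ?_ ?_ hint
      · refine continuousOn_finset_sum _ fun i _ => continuousOn_finset_sum _ fun j _ => ?_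
        exact (hτcont i j).mul (hτcont i j)
      · intro x hx
        exact Finset.sum_nonneg fun i _ => Finset.sum_nonneg fun j _ => mul_self_nonneg _
      · refine ⟨∑ _i : Fin d, ∑ _j : Fin d, B * B, fun x hx => ?_⟩
        rw [abs_of_nonneg (Finset.sum_nonneg fun i _ =>
          Finset.sum_nonneg fun j _ => mul_self_nonneg _)]
        refine Finset.sum_le_sum fun i _ => Finset.sum_le_sum fun j _ => ?_
        rw [← abs_mul_abs_self]
        exact mul_self_le_mul_self (abs_nonneg _) (hτbd x hx i j)
    intro p hp i j
    have h1 := hf0 p hp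
    have h2 : ∀ i' ∈ Finset.univ, (0:ℝ) ≤ ∑ j, symGrad d v p i' j * symGrad d v p i' j :=
      fun i' _ => Finset.sum_nonneg fun j _ => mul_self_nonneg _
    have h3 := (Finset.sum_eq_zero_iff_of_nonneg h2).mp h1 i (Finset.mem_univ i)
    have h4 := (Finset.sum_eq_zero_iff_of_nonneg
      (fun j' _ => mul_self_nonneg (symGrad d v p i j'))).mp h3 j (Finset.mem_univ j)
    exact mul_self_eq_zero.mp h4
  -- Step 3: segment argument.
  intro x hx
  by_cases hxK : x ∈ K
  swap
  · have hfr : x ∈ frontier K := by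
      rw [frontier, hKo.interior_eq]
      exact ⟨hx, hxK⟩
    exact hbdry ⟨x, hfr⟩
  by_cases hv0 : v x = 0
  · exact hv0
  have hu0 : v x ≠ 0 := hv0
  set u := v x with hu
  have hun : 0 < ‖u‖ := norm_pos_iff.mpr hu0
  obtain ⟨R, hR⟩ := hKb.subset_ball 0
  have hxR : ‖x‖ < R := by
    have := hR hxK
    rwa [Metric.mem_ball, dist_zero_right] at this
  have ht0pos : 0 < (R + ‖x‖) / ‖u‖ + 1 := by
    have h0 : 0 ≤ (R + ‖x‖) / ‖u‖ := div_nonneg (by linarith [norm_nonneg x]) hun.le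
    linarith
  set A := {t : ℝ | 0 < t ∧ x + t • u ∉ K} with hA
  have hA_ne : A.Nonempty := by
    refine ⟨(R + ‖x‖) / ‖u‖ + 1, ht0pos, ?_⟩
    intro hmem
    have h1 := hR hmem
    rw [Metric.mem_ball, dist_zero_right] at h1
    have h2 : ‖((R + ‖x‖) / ‖u‖ + 1) • u‖ ≤ ‖x + ((R + ‖x‖) / ‖u‖ + 1) • u‖ + ‖x‖ := by
      have := norm_sub_le (x + ((R + ‖x‖) / ‖u‖ + 1) • u) x
      simpa using this
    rw [norm_smul] at h2
    have h3 : ‖((R + ‖x‖) / ‖u‖ + 1 : ℝ)‖ = (R + ‖x‖) / ‖u‖ + 1 := by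
      rw [Real.norm_eq_abs, abs_of_pos ht0pos]
    rw [h3] at h2
    have h4 : ((R + ‖x‖) / ‖u‖ + 1) * ‖u‖ = R + ‖x‖ + ‖u‖ := by
      field_simp
    nlinarith [norm_nonneg x, norm_nonneg u]
  have hA_bdd : BddBelow A := ⟨0, fun t ht => ht.1.le⟩
  set T := sInf A with hT
  obtain ⟨δ, hδpos, hδ⟩ := Metric.isOpen_iff.mp hKo x hxK
  have hTpos : 0 < T := by
    have hlow : ∀ t ∈ A, δ / (2 * ‖u‖) ≤ t := by
      intro t ht
      by_contra hlt
      push_neg at hlt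
      apply ht.2
      apply hδ
      rw [Metric.mem_ball, dist_eq_norm]
      have : ‖x + t • u - x‖ = t * ‖u‖ := by
        rw [add_sub_cancel_left, norm_smul, Real.norm_eq_abs, abs_of_pos ht.1]
      rw [this]
      have h2 : t * ‖u‖ < (δ / (2 * ‖u‖)) * ‖u‖ := by
        exact mul_lt_mul_of_pos_right hlt hun
      have h3 : (δ / (2 * ‖u‖)) * ‖u‖ = δ / 2 := by field_simp
      linarith
    have := le_csInf hA_ne hlow
    have hδu : 0 < δ / (2 * ‖u‖) := by positivity
    linarith
  have hseg : ∀ t : ℝ, 0 ≤ t → t < T → x + t • u ∈ K := by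
    intro t ht0 htT
    rcases eq_or_lt_of_le ht0 with h | h
    · simpa [← h] using hxK
    · by_contra hnot
      exact absurd (csInf_le hA_bdd ⟨h, hnot⟩) (not_le.mpr htT)
  have hφc : Continuous (fun t : ℝ => x + t • u) :=
    continuous_const.add (continuous_id.smul continuous_const)
  have hzcl : x + T • u ∈ closure K := by
    have htend : Filter.Tendsto (fun t : ℝ => x + t • u) (𝓝[<] T) (𝓝 (x + T • u)) :=
      (hφc.tendsto T).mono_left nhdsWithin_le_nhds
    refine mem_closure_of_tendsto htend ?_
    have h1 : ∀ᶠ t in 𝓝[<] T, 0 < t :=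
      (eventually_gt_nhds hTpos).filter_mono nhdsWithin_le_nhds
    have h2 : ∀ᶠ t in 𝓝[<] T, t < T := eventually_mem_nhdsWithin
    filter_upwards [h1, h2] with t hpos hlt
    exact hseg t hpos.le hlt
  have hzK : x + T • u ∉ K := by
    intro hzmem
    obtain ⟨ε, hεpos, hε⟩ := Metric.isOpen_iff.mp hKo _ hzmem
    have hlow : ∀ t ∈ A, T + ε / (2 * ‖u‖) ≤ t := by
      intro t ht
      have htT : T ≤ t := csInf_le hA_bdd ht
      by_contra hlt
      push_neg at hlt
      apply ht.2
      apply hε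
      rw [Metric.mem_ball, dist_eq_norm]
      have heq : x + t • u - (x + T • u) = (t - T) • u := by
        rw [sub_smul]; abel
      rw [heq, norm_smul, Real.norm_eq_abs, abs_of_nonneg (by linarith)]
      have h2 : (t - T) * ‖u‖ < (ε / (2 * ‖u‖)) * ‖u‖ :=
        mul_lt_mul_of_pos_right (by linarith) hun
      have h3 : (ε / (2 * ‖u‖)) * ‖u‖ = ε / 2 := by field_simp
      linarith
    have := le_csInf hA_ne hlow
    have hεu : 0 < ε / (2 * ‖u‖) := by positivity
    linarith
  have hzfr : x + T • u ∈ frontier K := by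
    rw [frontier, hKo.interior_eq]
    exact ⟨hzcl, hzK⟩
  have hvz : v (x + T • u) = 0 := hbdry ⟨x + T • u, hzfr⟩
  -- the function g
  set g : ℝ → ℝ := fun t => ∑ i, v (x + t • u) i * u i with hg
  have hgmap : MapsTo (fun t : ℝ => x + t • u) (Icc 0 T) (closure K) := by
    intro t ht
    rcases eq_or_lt_of_le ht.2 with h | h
    · rw [h]; exact hzcl
    · exact subset_closure (hseg t ht.1 h)
  have hgc : ContinuousOn g (Icc 0 T) := by
    refine continuousOn_finset_sum _ fun i _ => ContinuousOn.mul ?_ continuousOn_const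
    exact ((hregv v hv i).continuousOn).comp hφc.continuousOn hgmap
  have hgderiv : ∀ t ∈ Ico 0 T, HasDerivWithinAt g 0 (Ici t) t := by
    intro t ht
    have hp : x + t • u ∈ K := hseg t ht.1 ht.2
    have hφd : HasDerivAt (fun t : ℝ => x + t • u) u t := by
      have h1 : HasDerivAt (fun t : ℝ => t • u) ((1:ℝ) • u) t := (hasDerivAt_id t).smul_const u
      simpa using h1.const_add x
    have hdi : ∀ i : Fin d, DifferentiableAt ℝ (fun y => v y i) (x + t • u) := by
      intro i
      refine DifferentiableWithinAt.differentiableAt ?_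
        (Filter.mem_of_superset (hKo.mem_nhds hp) subset_closure)
      exact ((hregv v hv i).differentiableOn one_ne_zero) _ (subset_closure hp)
    have hgi : ∀ i : Fin d, HasDerivAt (fun s : ℝ => v (x + s • u) i)
        (fderiv ℝ (fun y => v y i) (x + t • u) u) t := fun i =>
      (by have := (hdi i).hasFDerivAt.comp_hasDerivAt t hφd; exact this)
    have hgd : HasDerivAt g (∑ i, fderiv ℝ (fun y => v y i) (x + t • u) u * u i) t := by
      rw [hg]
      exact HasDerivAt.fun_sum fun i _ => (hgi i).mul_const (u i)
    have hurep : ∀ (L : (Fin d → ℝ) →L[ℝ] ℝ), L u = ∑ j, u j * L (Pi.single j 1) := by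
      intro L
      have hexp : u = ∑ j, u j • (Pi.single j 1 : Fin d → ℝ) := by
        funext k
        rw [Finset.sum_apply]
        simp [Pi.single_apply]
      conv_lhs => rw [hexp]
      rw [map_sum]
      exact Finset.sum_congr rfl fun j _ => by rw [L.map_smul]; simp [smul_eq_mul]
    have hskew : ∀ i j : Fin d, fderiv ℝ (fun y => v y i) (x + t • u) (Pi.single j 1) +
        fderiv ℝ (fun y => v y j) (x + t • u) (Pi.single i 1) = 0 := by
      intro i j
      have h1 := hε0 _ hp i j
      have h2 : symGrad d v (x + t • u) i j =
          (fderiv ℝ (fun y => v y i) (x + t • u) (Pi.single j 1) +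
            fderiv ℝ (fun y => v y j) (x + t • u) (Pi.single i 1)) / 2 := rfl
      rw [h2] at h1
      linarith
    have hder0 : (∑ i, fderiv ℝ (fun y => v y i) (x + t • u) u * u i) = 0 := by
      have hrw : (∑ i, fderiv ℝ (fun y => v y i) (x + t • u) u * u i) =
          ∑ i, ∑ j, u j * fderiv ℝ (fun y => v y i) (x + t • u) (Pi.single j 1) * u i := by
        refine Finset.sum_congr rfl fun i _ => ?_
        rw [hurep, Finset.sum_mul]
      rw [hrw]
      set D : Fin d → Fin d → ℝ :=
        fun i j => fderiv ℝ (fun y => v y i) (x + t • u) (Pi.single j 1) with hD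
      have hSS : (∑ i, ∑ j, u j * D i j * u i) + (∑ i, ∑ j, u j * D i j * u i) = 0 := by
        have hcomm : (∑ i, ∑ j, u j * D i j * u i) = ∑ i, ∑ j, u i * D j i * u j :=
          Finset.sum_comm
        nth_rewrite 2 [hcomm]
        rw [← Finset.sum_add_distrib]
        refine Finset.sum_eq_zero fun i _ => ?_
        rw [← Finset.sum_add_distrib]
        refine Finset.sum_eq_zero fun j _ => ?_
        have hsk : D j i = - D i j := by
          have h5 : D i j + D j i = 0 := hskew i j
          linarith
        rw [hsk]
        ring
      linarith
    rw [← hder0]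
    exact hgd.hasDerivWithinAt
  have hconst := constant_of_has_deriv_right_zero hgc hgderiv
  have hgT : g T = g 0 := hconst T (right_mem_Icc.mpr hTpos.le)
  have hgT0 : g T = 0 := by
    rw [hg]
    simp only []
    refine Finset.sum_eq_zero fun i _ => ?_
    rw [show v (x + T • u) i = 0 from by rw [hvz]; rfl, zero_mul]
  have hg0 : g 0 = ∑ i, v x i * v x i := by
    rw [hg]
    simp
    rfl
  have hsum : (∑ i, v x i * v x i) = 0 := by
    rw [← hg0, ← hgT, hgT0]
  funext i
  have h4 := (Finset.sum_eq_zero_iff_of_nonneg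
    (fun i' _ => mul_self_nonneg (v x i'))).mp hsum i (Finset.mem_univ i)
  exact mul_self_eq_zero.mp h4
end

section
/- Suppose Σ and V are finite-dimensional spaces on a Lipschitz domain K with ε(V) ⊂ Σ and ∇·Σ ⊂ V. Set Σ̃ := ε(V) ⊕ Σ_sbb where Σ_sbb := {τ ∈ Σ : ∇·τ = 0 and τn = 0 on ∂K}. Then the normal trace map τ ↦ τn|_{∂K} restricted to Σ̃^⊥ (the L²(K)-orthogonal complement of Σ̃ in Σ) is injective. -/
open MeasureTheory

/-- A continuous nonnegative function with vanishing integral over an open set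
vanishes on that set. -/
lemma zero_of_integral_zero_s14 {d : ℕ} {K : Set (Fin d → ℝ)} (hKo : IsOpen K)
    (hKcl : IsCompact (closure K)) (g : (Fin d → ℝ) → ℝ)
    (hg : ContinuousOn g (closure K)) (hpos : ∀ x, 0 ≤ g x)
    (h0 : ∫ x in K, g x = 0) : ∀ x ∈ K, g x = 0 := by
  have hint : IntegrableOn g K :=
    (hg.integrableOn_compact hKcl).mono_set subset_closure
  have hae : g =ᵐ[volume.restrict K] 0 :=
    (integral_eq_zero_iff_of_nonneg_ae (Filter.Eventually.of_forall hpos) hint).mp h0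
  intro x hx
  by_contra hne
  have hgx : 0 < g x := lt_of_le_of_ne (hpos x) (Ne.symm hne)
  have hcont : ContinuousAt g x :=
    (hg.mono subset_closure).continuousAt (hKo.mem_nhds hx)
  have hs : g ⁻¹' Set.Ioi 0 ∈ nhds x :=
    hcont.preimage_mem_nhds (Ioi_mem_nhds hgx)
  obtain ⟨O, hOsub, hOopen, hxO⟩ :=
    mem_nhds_iff.mp (Filter.inter_mem hs (hKo.mem_nhds hx))
  have hOpos : 0 < volume O := hOopen.measure_pos volume ⟨x, hxO⟩
  have hnull : volume.restrict K {y | g y ≠ 0} = 0 := by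
    have h := hae
    rw [Filter.EventuallyEq, MeasureTheory.ae_iff] at h
    simpa using h
  have hO0 : volume.restrict K O = 0 := by
    refine measure_mono_null (fun y hy => ?_) hnull
    exact ne_of_gt (hOsub hy).1
  have hOK : volume.restrict K O = volume O := by
    rw [Measure.restrict_apply hOopen.measurableSet]
    congr 1
    exact Set.inter_eq_self_of_subset_left (fun y hy => (hOsub hy).2)
  rw [hOK] at hO0
  exact absurd hO0 hOpos.ne'

/-- Let `K ⊆ ℝⁿ` be a bounded Lipschitz domain and let `Σ`, `V` be finite-dimensional
spaces of symmetric tensor fields resp. vector fields on `K` with `ε(V) ⊆ Σ` and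
`∇·Σ ⊆ V` (the Gauss–Green identity being assumed).  With
`Σ̃ := ε(V) ⊕ Σ_sbb`, where `Σ_sbb = {τ ∈ Σ : ∇·τ = 0, τn = 0 on ∂K}`, the normal
trace `τ ↦ τn|_{∂K}` restricted to `Σ̃^⊥` (the `L²(K)`-orthogonal complement of `Σ̃`
in `Σ`) is injective: if `τ ∈ Σ` is `L²(K)`-orthogonal to `ε(V)` and to `Σ_sbb` and
`τn = 0` on `∂K`, then `τ = 0` on `K̄`. -/
theorem normal_trace_injective_on_Sigmatilde_perp
    (d : ℕ) (K : Set (Fin d → ℝ)) (hKo : IsOpen K)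
    (hKb : Bornology.IsBounded K) (hKc : IsConnected K)
    (nrm : ↥(frontier K) → (Fin d → ℝ)) (hnrm : ∀ x, ‖nrm x‖ = 1)
    (σb : Measure ↥(frontier K))
    (Sg : Submodule ℝ ((Fin d → ℝ) → Matrix (Fin d) (Fin d) ℝ))
    (V : Submodule ℝ ((Fin d → ℝ) → (Fin d → ℝ)))
    [FiniteDimensional ℝ ↥Sg] [FiniteDimensional ℝ ↥V]
    (hsym : ∀ τ ∈ Sg, ∀ x, (τ x).IsSymm)
    (hregτ : ∀ τ ∈ Sg, ∀ i j, ContDiffOn ℝ 1 (fun y => τ y i j) (closure K))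
    (hregv : ∀ v ∈ V, ∀ i, ContDiffOn ℝ 1 (fun y => v y i) (closure K))
    (hεV : ∀ v ∈ V, symGrad d v ∈ Sg)
    (hdivS : ∀ τ ∈ Sg, matDiv d τ ∈ V)
    (hGG : ∀ τ ∈ Sg, ∀ v ∈ V,
      (∫ x, ∑ i, (τ (x : Fin d → ℝ)).mulVec (nrm x) i * v (x : Fin d → ℝ) i ∂σb)
        = frobK d K τ (symGrad d v) + dotK d K (matDiv d τ) v) :
    ∀ τ ∈ Sg,
      (∀ v ∈ V, frobK d K τ (symGrad d v) = 0) →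
      (∀ ρ ∈ Sg, (∀ x ∈ K, matDiv d ρ x = 0) →
        (∀ x : ↥(frontier K), (ρ (x : Fin d → ℝ)).mulVec (nrm x) = 0) →
        frobK d K τ ρ = 0) →
      (∀ x : ↥(frontier K), (τ (x : Fin d → ℝ)).mulVec (nrm x) = 0) →
      ∀ x ∈ closure K, τ x = 0 := by
  intro τ hτ h1 h2 hbdry
  have hKcl : IsCompact (closure K) :=
    Metric.isCompact_of_isClosed_isBounded isClosed_closure hKb.closure
  -- Stage 1: ∇·τ = 0 on K
  set v : (Fin d → ℝ) → (Fin d → ℝ) := matDiv d τ with hv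
  have hvV : v ∈ V := hdivS τ hτ
  have hvc : ContinuousOn (fun x => ∑ i, v x i * v x i) (closure K) :=
    continuousOn_finset_sum _ fun i _ =>
      ((hregv v hvV i).continuousOn).mul ((hregv v hvV i).continuousOn)
  have hGGv := hGG τ hτ v hvV
  have hlhs : (∫ x, ∑ i, (τ (x : Fin d → ℝ)).mulVec (nrm x) i
      * v (x : Fin d → ℝ) i ∂σb) = 0 := by
    have : (fun x : ↥(frontier K) => ∑ i, (τ (x : Fin d → ℝ)).mulVec (nrm x) i
        * v (x : Fin d → ℝ) i) = fun _ => 0 := by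
      funext x
      simp [hbdry x]
    rw [this, integral_zero]
  have hdot : dotK d K v v = 0 := by
    have := hGGv
    rw [hlhs, h1 v hvV, zero_add] at this
    linarith
  have hv0 : ∀ x ∈ K, ∀ i, v x i = 0 := by
    have h0 := zero_of_integral_zero_s14 hKo hKcl
      (fun x => ∑ i, v x i * v x i) hvc
      (fun x => Finset.sum_nonneg fun i _ => mul_self_nonneg _) hdot
    intro x hx i
    have := (Finset.sum_eq_zero_iff_of_nonneg
      (fun i _ => mul_self_nonneg (v x i))).mp (h0 x hx) i (Finset.mem_univ i)
    exact mul_self_eq_zero.mp this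
  -- Stage 2: use orthogonality to Σ_sbb with ρ = τ
  have hdiv0 : ∀ x ∈ K, matDiv d τ x = 0 := by
    intro x hx; funext i; exact hv0 x hx i
  have hfrob : frobK d K τ τ = 0 := h2 τ hτ hdiv0 hbdry
  have hτc : ContinuousOn (fun x => ∑ i, ∑ j, τ x i j * τ x i j) (closure K) :=
    continuousOn_finset_sum _ fun i _ => continuousOn_finset_sum _ fun j _ =>
      ((hregτ τ hτ i j).continuousOn).mul ((hregτ τ hτ i j).continuousOn)
  have hτ0 : ∀ x ∈ K, ∀ i j, τ x i j = 0 := by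
    have h0 := zero_of_integral_zero_s14 hKo hKcl
      (fun x => ∑ i, ∑ j, τ x i j * τ x i j) hτc
      (fun x => Finset.sum_nonneg fun i _ =>
        Finset.sum_nonneg fun j _ => mul_self_nonneg _) hfrob
    intro x hx i j
    have hi := (Finset.sum_eq_zero_iff_of_nonneg
      (fun i _ => Finset.sum_nonneg fun j _ => mul_self_nonneg (τ x i j))).mp
      (h0 x hx) i (Finset.mem_univ i)
    have hj := (Finset.sum_eq_zero_iff_of_nonneg
      (fun j _ => mul_self_nonneg (τ x i j))).mp hi j (Finset.mem_univ j)
    exact mul_self_eq_zero.mp hj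
  -- Stage 3: extend to the closure by continuity
  intro x hx
  ext i j
  show τ x i j = 0
  have hne : (nhdsWithin x K).NeBot := mem_closure_iff_nhdsWithin_neBot.mp hx
  have ht1 : Filter.Tendsto (fun y => τ y i j) (nhdsWithin x K) (nhds (τ x i j)) := by
    have := ((hregτ τ hτ i j).continuousOn x hx)
    exact this.mono_left (nhdsWithin_mono x subset_closure)
  have ht2 : Filter.Tendsto (fun y => τ y i j) (nhdsWithin x K) (nhds 0) := by
    refine Filter.Tendsto.congr' ?_ tendsto_const_nhds
    filter_upwards [self_mem_nhdsWithin] with y hy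
    exact (hτ0 y hy i j).symm
  exact tendsto_nhds_unique ht1 ht2
end

section
/- On the unit square K = (0,1)² with edges e₁ = {x=0}, e₂ = {y=0}, e₃ = {x=1}, e₄ = {y=1}, the three symmetric tensor fields τ₁ = [[x^{k+1}y^{k-1},0],[0,0]], τ₂ = [[x^{k+1}y^{k},0],[0,0]], τ₃ = [[0,0],[0,x^{k}y^{k+1}]] (k ≥ 1) satisfy: their normal traces on each edge are polynomials of degree ≤ k, and their divergences span a 3-dimensional subspace of vector polynomial fields intersecting ∇·Q_k(K;S) trivially, where Q_k(K;S) are symmetric tensors with entries of degree ≤ k in each variable. -/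
open MvPolynomial

section AuxLemmas

lemma aux_coeff_pderiv (i : Fin 2) (m : Fin 2 →₀ ℕ) (f : MvPolynomial (Fin 2) ℝ) :
    coeff m (pderiv i f) = (m i + 1 : ℝ) * coeff (m + Finsupp.single i 1) f := by
  induction f using MvPolynomial.induction_on' with
  | add p q hp hq => simp [map_add, coeff_add, hp, hq, mul_add]
  | monomial s a =>
    rw [pderiv_monomial, coeff_monomial, coeff_monomial]
    by_cases h : s = m + Finsupp.single i 1
    · subst h
      rw [if_pos (add_tsub_cancel_right _ _), if_pos rfl]
      simp [mul_comm]
    · rw [if_neg h, mul_zero]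
      by_cases h0 : s i = 0
      · split_ifs <;> simp [h0]
      · have hle : Finsupp.single i 1 ≤ s := by
          rw [Finsupp.single_le_iff]; omega
        have : s - Finsupp.single i 1 ≠ m := by
          intro hm
          exact h (by rw [← hm, tsub_add_cancel_of_le hle])
        simp [this]

lemma aux_coeff_pderiv_zero {i : Fin 2} {f : MvPolynomial (Fin 2) ℝ} {k : ℕ}
    (hf : degreeOf i f ≤ k) {m : Fin 2 →₀ ℕ} (hm : k ≤ m i) :
    coeff m (pderiv i f) = 0 := by
  rw [aux_coeff_pderiv]
  have : coeff (m + Finsupp.single i 1) f = 0 := by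
    by_contra h
    have h2 := degreeOf_le_iff.mp hf _ (mem_support_iff.mpr h)
    simp [Finsupp.add_apply, Finsupp.single_apply] at h2
    omega
  simp [this]

lemma aux_coeff_XX (a b c d : ℕ) :
    coeff (Finsupp.single 0 a + Finsupp.single 1 b)
      ((X 0 : MvPolynomial (Fin 2) ℝ) ^ c * X 1 ^ d) =
    if c = a ∧ d = b then 1 else 0 := by
  rw [X_pow_eq_monomial, X_pow_eq_monomial, monomial_mul, coeff_monomial]
  have key : (Finsupp.single (0 : Fin 2) c + Finsupp.single 1 d =
      Finsupp.single 0 a + Finsupp.single 1 b) ↔ (c = a ∧ d = b) := by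
    constructor
    · intro h
      constructor
      · have := DFunLike.congr_fun h 0; simpa using this
      · have := DFunLike.congr_fun h 1; simpa using this
    · rintro ⟨rfl, rfl⟩; rfl
  simp only [key, mul_one]

lemma aux_eadd0 (a b : ℕ) :
    (Finsupp.single (0:Fin 2) a + Finsupp.single 1 b : Fin 2 →₀ ℕ) 0 = a := by
  simp [Finsupp.single_apply]

lemma aux_eadd1 (a b : ℕ) :
    (Finsupp.single (0:Fin 2) a + Finsupp.single 1 b : Fin 2 →₀ ℕ) 1 = b := by
  simp [Finsupp.single_apply]

lemma aux_shift0 (a b : ℕ) :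
    (Finsupp.single (0:Fin 2) a + Finsupp.single 1 b) + Finsupp.single 0 1
      = Finsupp.single (0:Fin 2) (a+1) + Finsupp.single 1 b := by
  rw [add_right_comm, ← Finsupp.single_add]

lemma aux_shift1 (a b : ℕ) :
    (Finsupp.single (0:Fin 2) a + Finsupp.single 1 b) + Finsupp.single 1 1
      = Finsupp.single (0:Fin 2) a + Finsupp.single 1 (b+1) := by
  rw [add_assoc, ← Finsupp.single_add]

lemma aux_cp0 (c d a b : ℕ) :
    coeff (Finsupp.single 0 a + Finsupp.single 1 b)
      (pderiv 0 ((X 0 : MvPolynomial (Fin 2) ℝ) ^ c * X 1 ^ d)) =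
    (a + 1 : ℝ) * (if c = a + 1 ∧ d = b then 1 else 0) := by
  rw [aux_coeff_pderiv, aux_shift0, aux_coeff_XX, aux_eadd0]

lemma aux_cp1 (c d a b : ℕ) :
    coeff (Finsupp.single 0 a + Finsupp.single 1 b)
      (pderiv 1 ((X 0 : MvPolynomial (Fin 2) ℝ) ^ c * X 1 ^ d)) =
    (b + 1 : ℝ) * (if c = a ∧ d = b + 1 then 1 else 0) := by
  rw [aux_coeff_pderiv, aux_shift1, aux_coeff_XX, aux_eadd1]

lemma aux_degreeOf_smul_le (r : ℝ) (p : MvPolynomial (Fin 2) ℝ) (n : Fin 2) :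
    degreeOf n (r • p) ≤ degreeOf n p := by
  rw [degreeOf_eq_sup, degreeOf_eq_sup]
  exact Finset.sup_mono MvPolynomial.support_smul

lemma aux_m00 (p q r s : MvPolynomial (Fin 2) ℝ) : (!![p,q;r,s]) 0 0 = p := rfl
lemma aux_m01 (p q r s : MvPolynomial (Fin 2) ℝ) : (!![p,q;r,s]) 0 1 = q := rfl
lemma aux_m10 (p q r s : MvPolynomial (Fin 2) ℝ) : (!![p,q;r,s]) 1 0 = r := rfl
lemma aux_m11 (p q r s : MvPolynomial (Fin 2) ℝ) : (!![p,q;r,s]) 1 1 = s := rfl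

end AuxLemmas

/-- Evaluation of a polynomial matrix at a point of the plane. -/
noncomputable def evalMat (τ : Matrix (Fin 2) (Fin 2) (MvPolynomial (Fin 2) ℝ))
    (p : ℝ × ℝ) : Matrix (Fin 2) (Fin 2) ℝ :=
  fun i j => eval ![p.1, p.2] (τ i j)

/-- The four edges of the unit square `K = (0,1)²`, given as parametrizations
`t ↦ point` (for `t ∈ [0,1]`) together with the outward unit normal:
`e₁ = {x = 0}`, `e₂ = {y = 0}`, `e₃ = {x = 1}`, `e₄ = {y = 1}`. -/
noncomputable def squareEdges : Fin 4 → (ℝ → ℝ × ℝ) × (ℝ × ℝ) :=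
  ![(fun t => ((0 : ℝ), t), (-1, 0)), (fun t => (t, (0 : ℝ)), (0, -1)),
    (fun t => ((1 : ℝ), t), (1, 0)), (fun t => (t, (1 : ℝ)), (0, 1))]

/-- On the unit square, the three symmetric tensor fields
`τ₁ = [[x^{k+1}y^{k-1},0],[0,0]]`, `τ₂ = [[x^{k+1}y^{k},0],[0,0]]`,
`τ₃ = [[0,0],[0,x^{k}y^{k+1}]]` (`k ≥ 1`) have normal traces on each edge that are
polynomials of degree `≤ k` in the edge parameter, and their divergences span a
`3`-dimensional subspace intersecting `∇·Q_k(K;S)` trivially. -/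
theorem fillV_tensors_unit_square
    (k : ℕ) (hk : 1 ≤ k)
    (τ₁ τ₂ τ₃ : Matrix (Fin 2) (Fin 2) (MvPolynomial (Fin 2) ℝ))
    (h₁ : τ₁ = !![X 0 ^ (k + 1) * X 1 ^ (k - 1), 0; 0, 0])
    (h₂ : τ₂ = !![X 0 ^ (k + 1) * X 1 ^ k, 0; 0, 0])
    (h₃ : τ₃ = !![0, 0; 0, X 0 ^ k * X 1 ^ (k + 1)])
    (dvg : Matrix (Fin 2) (Fin 2) (MvPolynomial (Fin 2) ℝ) →
      (Fin 2 → MvPolynomial (Fin 2) ℝ))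
    (hdvg : ∀ τ, dvg τ = fun i => ∑ j, pderiv j (τ i j)) :
    (∀ τ ∈ ({τ₁, τ₂, τ₃} : Set (Matrix (Fin 2) (Fin 2) (MvPolynomial (Fin 2) ℝ))),
      ∀ m : Fin 4, ∃ P₁ P₂ : Polynomial ℝ, P₁.natDegree ≤ k ∧ P₂.natDegree ≤ k ∧
        ∀ t ∈ Set.Icc (0 : ℝ) 1,
          (evalMat τ ((squareEdges m).1 t)).mulVec
              ![(squareEdges m).2.1, (squareEdges m).2.2]
            = ![P₁.eval t, P₂.eval t]) ∧
    Module.finrank ℝ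
      ↥(Submodule.span ℝ ({dvg τ₁, dvg τ₂, dvg τ₃} :
          Set (Fin 2 → MvPolynomial (Fin 2) ℝ))) = 3 ∧
    Submodule.span ℝ ({dvg τ₁, dvg τ₂, dvg τ₃} :
          Set (Fin 2 → MvPolynomial (Fin 2) ℝ))
      ⊓ Submodule.span ℝ
          {f : Fin 2 → MvPolynomial (Fin 2) ℝ |
            ∃ τ : Matrix (Fin 2) (Fin 2) (MvPolynomial (Fin 2) ℝ),
              τ.IsSymm ∧ (∀ i j, (τ i j).degreeOf 0 ≤ k ∧ (τ i j).degreeOf 1 ≤ k) ∧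
              f = dvg τ}
      = ⊥ := by
  obtain ⟨j, rfl⟩ : ∃ j, k = j + 1 := ⟨k - 1, (Nat.succ_pred_eq_of_pos hk).symm⟩
  simp only [Nat.add_sub_cancel] at h₁
  -- abbreviations for the three divergences
  set D1 := dvg τ₁ with hD1
  set D2 := dvg τ₂ with hD2
  set D3 := dvg τ₃ with hD3
  -- componentwise description of the divergence
  have hcomp : ∀ (τ : Matrix (Fin 2) (Fin 2) (MvPolynomial (Fin 2) ℝ)) (i : Fin 2)
      (e : Fin 2 →₀ ℕ),
      coeff e (dvg τ i) = coeff e (pderiv 0 (τ i 0)) + coeff e (pderiv 1 (τ i 1)) := by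
    intro τ i e
    rw [hdvg]
    simp [Fin.sum_univ_two]
  -- the three key exponent vectors
  set e1 : Fin 2 →₀ ℕ := Finsupp.single 0 (j+1) + Finsupp.single 1 j with he1
  set e2 : Fin 2 →₀ ℕ := Finsupp.single 0 (j+1) + Finsupp.single 1 (j+1) with he2
  set e4 : Fin 2 →₀ ℕ := Finsupp.single 0 j + Finsupp.single 1 (j+1) with he4
  -- coefficients of the three divergences
  have hD1e1 : coeff e1 (D1 0) = (j + 2 : ℝ) := by
    rw [hD1, hcomp, h₁, aux_m00, aux_m01, he1, aux_cp0]
    simp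
    ring
  have hD1e2 : coeff e2 (D1 0) = 0 := by
    rw [hD1, hcomp, h₁, aux_m00, aux_m01, he2, aux_cp0]
    simp
  have hD2e1 : coeff e1 (D2 0) = 0 := by
    rw [hD2, hcomp, h₂, aux_m00, aux_m01, he1, aux_cp0]
    simp
  have hD2e2 : coeff e2 (D2 0) = (j + 2 : ℝ) := by
    rw [hD2, hcomp, h₂, aux_m00, aux_m01, he2, aux_cp0]
    simp
    ring
  have hD1row1 : D1 1 = 0 := by
    rw [hD1, hdvg, h₁]
    simp [Fin.sum_univ_two]
  have hD2row1 : D2 1 = 0 := by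
    rw [hD2, hdvg, h₂]
    simp [Fin.sum_univ_two]
  have hD3row0 : D3 0 = 0 := by
    rw [hD3, hdvg, h₃]
    simp [Fin.sum_univ_two]
  have hD3e2 : coeff e2 (D3 1) = (j + 2 : ℝ) := by
    rw [hD3, hcomp, h₃, aux_m10, aux_m11, he2, aux_cp1]
    simp
    ring
  have hD3e4 : coeff e4 (D3 1) = 0 := by
    rw [hD3, hcomp, h₃, aux_m10, aux_m11, he4, aux_cp1]
    simp
  -- coefficients of divergences of admissible tensors
  have hadm0 : ∀ (τ : Matrix (Fin 2) (Fin 2) (MvPolynomial (Fin 2) ℝ)),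
      (∀ i i', (τ i i').degreeOf 0 ≤ j+1 ∧ (τ i i').degreeOf 1 ≤ j+1) →
      ∀ i : Fin 2, coeff e2 (dvg τ i) = 0 := by
    intro τ hτ i
    rw [hcomp]
    rw [aux_coeff_pderiv_zero (hτ i 0).1 (by simp [he2, aux_eadd0]),
      aux_coeff_pderiv_zero (hτ i 1).2 (by simp [he2, aux_eadd1]), add_zero]
  have hadm1 : ∀ (τ : Matrix (Fin 2) (Fin 2) (MvPolynomial (Fin 2) ℝ)),
      (∀ i i', (τ i i').degreeOf 0 ≤ j+1 ∧ (τ i i').degreeOf 1 ≤ j+1) →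
      coeff e1 (dvg τ 0) = (j + 1 : ℝ) * coeff e2 (τ 0 1) := by
    intro τ hτ
    rw [hcomp]
    rw [aux_coeff_pderiv_zero (hτ 0 0).1 (by simp [he1, aux_eadd0]), zero_add,
      aux_coeff_pderiv, he1, aux_shift1, aux_eadd1]
  have hadm2 : ∀ (τ : Matrix (Fin 2) (Fin 2) (MvPolynomial (Fin 2) ℝ)),
      (∀ i i', (τ i i').degreeOf 0 ≤ j+1 ∧ (τ i i').degreeOf 1 ≤ j+1) →
      coeff e4 (dvg τ 1) = (j + 1 : ℝ) * coeff e2 (τ 1 0) := by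
    intro τ hτ
    rw [hcomp]
    rw [aux_coeff_pderiv_zero (hτ 1 1).2 (by simp [he4, aux_eadd1]), add_zero,
      aux_coeff_pderiv, he4, aux_shift0, aux_eadd0]
  -- the key algebraic fact
  have key : ∀ (a b c : ℝ) (τ : Matrix (Fin 2) (Fin 2) (MvPolynomial (Fin 2) ℝ)),
      τ.IsSymm → (∀ i i', (τ i i').degreeOf 0 ≤ j+1 ∧ (τ i i').degreeOf 1 ≤ j+1) →
      a • D1 + b • D2 + c • D3 = dvg τ → a = 0 ∧ b = 0 ∧ c = 0 := by
    intro a b c τ hsymm hdeg heq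
    have hj2 : (j + 2 : ℝ) ≠ 0 := by positivity
    have hj1 : (j + 1 : ℝ) ≠ 0 := by positivity
    have hget : ∀ (i : Fin 2) (e : Fin 2 →₀ ℕ),
        a * coeff e (D1 i) + b * coeff e (D2 i) + c * coeff e (D3 i)
          = coeff e (dvg τ i) := by
      intro i e
      have := congrArg (fun f => coeff e (f i)) heq
      simpa [coeff_add, coeff_smul, smul_eq_mul] using this
    have hb : b = 0 := by
      have h := hget 0 e2
      rw [hD1e2, hD2e2, hD3row0, hadm0 τ hdeg 0] at h
      simp at h
      rcases h with h | h
      · exact h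
      · exact absurd h hj2
    have hc : c = 0 := by
      have h := hget 1 e2
      rw [hD1row1, hD2row1, hD3e2, hadm0 τ hdeg 1] at h
      simp at h
      rcases h with h | h
      · exact h
      · exact absurd h hj2
    have hsym01 : τ 1 0 = τ 0 1 := by
      have := congrFun (congrFun hsymm 0) 1
      simpa [Matrix.transpose_apply] using this
    have ht : coeff e2 (τ 0 1) = 0 := by
      have h := hget 1 e4
      rw [hD1row1, hD2row1, hD3e4, hadm2 τ hdeg, hsym01] at h
      simp [hc] at h
      rcases h with h | h
      · exact absurd h hj1
      · exact h
    have ha : a = 0 := by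
      have h := hget 0 e1
      rw [hD1e1, hD2e1, hD3row0, hadm1 τ hdeg, ht] at h
      simp [hb, hc] at h
      rcases h with h | h
      · exact h
      · exact absurd h hj2
    exact ⟨ha, hb, hc⟩
  have hdvg0 : dvg 0 = 0 := by
    rw [hdvg]; funext i; simp
  have hdeg0 : ∀ i i', ((0 : Matrix (Fin 2) (Fin 2) (MvPolynomial (Fin 2) ℝ)) i i').degreeOf 0 ≤ j+1
      ∧ ((0 : Matrix (Fin 2) (Fin 2) (MvPolynomial (Fin 2) ℝ)) i i').degreeOf 1 ≤ j+1 := by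
    intro i i'; simp [Matrix.zero_apply]
  refine ⟨?_, ?_, ?_⟩
  · -- edge normal traces
    intro τ hτ m
    have hzp : (0:ℝ) ^ (j + 1 + 1) = 0 := by simp
    rcases hτ with rfl | rfl | rfl
    · rw [h₁]
      fin_cases m
      · exact ⟨0, 0, by simp, by simp, fun t ht => by
          funext i; fin_cases i <;>
            simp [evalMat, squareEdges, Matrix.mulVec, dotProduct,
              Fin.sum_univ_two, hzp]⟩
      · exact ⟨0, 0, by simp, by simp, fun t ht => by
          funext i; fin_cases i <;>
            simp [evalMat, squareEdges, Matrix.mulVec, dotProduct,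
              Fin.sum_univ_two]⟩
      · exact ⟨Polynomial.X ^ j, 0, by simp [Polynomial.natDegree_X_pow], by simp,
          fun t ht => by
          funext i; fin_cases i <;>
            simp [evalMat, squareEdges, Matrix.mulVec, dotProduct,
              Fin.sum_univ_two]⟩
      · exact ⟨0, 0, by simp, by simp, fun t ht => by
          funext i; fin_cases i <;>
            simp [evalMat, squareEdges, Matrix.mulVec, dotProduct,
              Fin.sum_univ_two]⟩
    · rw [h₂]
      fin_cases m
      · exact ⟨0, 0, by simp, by simp, fun t ht => by
          funext i; fin_cases i <;>
            simp [evalMat, squareEdges, Matrix.mulVec, dotProduct,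
              Fin.sum_univ_two, hzp]⟩
      · exact ⟨0, 0, by simp, by simp, fun t ht => by
          funext i; fin_cases i <;>
            simp [evalMat, squareEdges, Matrix.mulVec, dotProduct,
              Fin.sum_univ_two]⟩
      · exact ⟨Polynomial.X ^ (j+1), 0, by simp [Polynomial.natDegree_X_pow], by simp,
          fun t ht => by
          funext i; fin_cases i <;>
            simp [evalMat, squareEdges, Matrix.mulVec, dotProduct,
              Fin.sum_univ_two]⟩
      · exact ⟨0, 0, by simp, by simp, fun t ht => by
          funext i; fin_cases i <;>
            simp [evalMat, squareEdges, Matrix.mulVec, dotProduct,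
              Fin.sum_univ_two]⟩
    · rw [h₃]
      fin_cases m
      · exact ⟨0, 0, by simp, by simp, fun t ht => by
          funext i; fin_cases i <;>
            simp [evalMat, squareEdges, Matrix.mulVec, dotProduct,
              Fin.sum_univ_two]⟩
      · exact ⟨0, 0, by simp, by simp, fun t ht => by
          funext i; fin_cases i <;>
            simp [evalMat, squareEdges, Matrix.mulVec, dotProduct,
              Fin.sum_univ_two, hzp]⟩
      · exact ⟨0, 0, by simp, by simp, fun t ht => by
          funext i; fin_cases i <;>
            simp [evalMat, squareEdges, Matrix.mulVec, dotProduct,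
              Fin.sum_univ_two]⟩
      · exact ⟨0, Polynomial.X ^ (j+1), by simp, by simp [Polynomial.natDegree_X_pow],
          fun t ht => by
          funext i; fin_cases i <;>
            simp [evalMat, squareEdges, Matrix.mulVec, dotProduct,
              Fin.sum_univ_two]⟩
  · -- finrank of the span is 3
    have hli : LinearIndependent ℝ ![D1, D2, D3] := by
      rw [Fintype.linearIndependent_iff]
      intro g hg
      have hsum : g 0 • D1 + g 1 • D2 + g 2 • D3 = dvg 0 := by
        rw [hdvg0]
        rw [← hg]
        simp [Fin.sum_univ_three]
      obtain ⟨ha, hb, hc⟩ := key _ _ _ 0 Matrix.isSymm_zero hdeg0 hsum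
      intro i
      fin_cases i <;> assumption
    have hrange : ({D1, D2, D3} : Set (Fin 2 → MvPolynomial (Fin 2) ℝ))
        = Set.range ![D1, D2, D3] := by
      ext x
      constructor
      · rintro (rfl | rfl | rfl)
        exacts [⟨0, rfl⟩, ⟨1, rfl⟩, ⟨2, rfl⟩]
      · rintro ⟨i, rfl⟩
        fin_cases i
        · exact Or.inl rfl
        · exact Or.inr (Or.inl rfl)
        · exact Or.inr (Or.inr rfl)
    rw [hrange, finrank_span_eq_card hli]
    simp
  · -- trivial intersection
    rw [Submodule.eq_bot_iff]
    intro x hx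
    rw [Submodule.mem_inf] at hx
    obtain ⟨hx1, hx2⟩ := hx
    obtain ⟨a, b, c, rfl⟩ : ∃ a b c : ℝ, x = a • D1 + b • D2 + c • D3 := by
      rw [Submodule.mem_span_insert] at hx1
      obtain ⟨a, y, hy, rfl⟩ := hx1
      rw [Submodule.mem_span_insert] at hy
      obtain ⟨b, z, hz, rfl⟩ := hy
      rw [Submodule.mem_span_singleton] at hz
      obtain ⟨c, rfl⟩ := hz
      exact ⟨a, b, c, by rw [add_assoc]⟩
    obtain ⟨τ, hsymm, hdeg, hτ⟩ : ∃ τ : Matrix (Fin 2) (Fin 2) (MvPolynomial (Fin 2) ℝ),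
        τ.IsSymm ∧ (∀ i i', (τ i i').degreeOf 0 ≤ j+1 ∧ (τ i i').degreeOf 1 ≤ j+1) ∧
        a • D1 + b • D2 + c • D3 = dvg τ := by
      refine Submodule.span_induction ?_ ?_ ?_ ?_ hx2
      · rintro f ⟨τ, hs, hd, rfl⟩
        exact ⟨τ, hs, hd, rfl⟩
      · exact ⟨0, Matrix.isSymm_zero, hdeg0, hdvg0.symm⟩
      · rintro f g _ _ ⟨τ, hs, hd, rfl⟩ ⟨σ, hs', hd', rfl⟩
        refine ⟨τ + σ, hs.add hs', ?_, ?_⟩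
        · intro i i'
          rw [Matrix.add_apply]
          exact ⟨le_trans (degreeOf_add_le _ _ _) (max_le (hd i i').1 (hd' i i').1),
            le_trans (degreeOf_add_le _ _ _) (max_le (hd i i').2 (hd' i i').2)⟩
        · rw [hdvg, hdvg, hdvg]
          funext i
          simp [Matrix.add_apply, map_add, Finset.sum_add_distrib]
      · rintro r f _ ⟨τ, hs, hd, rfl⟩
        refine ⟨r • τ, hs.smul r, ?_, ?_⟩
        · intro i i'
          exact ⟨le_trans (by rw [Matrix.smul_apply]; exact aux_degreeOf_smul_le r _ _) (hd i i').1,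
            le_trans (by rw [Matrix.smul_apply]; exact aux_degreeOf_smul_le r _ _) (hd i i').2⟩
        · rw [hdvg, hdvg]
          funext i
          simp [Matrix.smul_apply, Finset.smul_sum]
    obtain ⟨ha, hb, hc⟩ := key a b c τ hsymm hdeg hτ
    simp [ha, hb, hc]
end

section
/- Let K be a triangle with barycentric-type linear functions λ₁, λ₂, λ₃ (λᵢ vanishes on edge eᵢ, maximum 1 on K̄). The rational edge bubble Bᵢ := (λ₁λ₂λ₃)·∏_{j≠i} λⱼ/(λⱼ+λᵢ) satisfies: Bᵢ = 0 on all of ∂K, the normal derivative ∂Bᵢ/∂nⱼ vanishes on every edge eⱼ with j ≠ i, and ∂Bᵢ/∂nᵢ on edge eᵢ equals λ_{i-1}λ_{i+1} (indices mod 3), up to the normalization of λᵢ. In particular Bᵢ extends continuously to K̄ and is C¹ on K̄ away from the vertices. -/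
/-- Let `K` be a nondegenerate triangle with vertices `v₀,v₁,v₂`, edges
`eᵢ = [vᵢ, vᵢ₊₁]` with outward unit normals `nᵢ`, and let `λᵢ` be the affine
function vanishing on `eᵢ` with maximum value `1` on `K̄` (attained at the opposite
vertex `vᵢ₊₂`).  The rational edge bubble
`Bᵢ = (λ₀λ₁λ₂)·∏_{j≠i} λⱼ/(λⱼ+λᵢ)` satisfies: `Bᵢ` is continuous on `K̄`;
`Bᵢ = 0` on all of `∂K`; the normal derivative `∂Bᵢ/∂nⱼ` vanishes on every edge
`eⱼ` with `j ≠ i`; on the edge `eᵢ`, `∂Bᵢ/∂nᵢ` equals `λ_{i-1}λ_{i+1}` up to a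
nonzero normalization constant; and `Bᵢ` is `C¹` on `K̄` away from the vertices. -/
theorem triangle_rational_edge_bubble
    (v : Fin 3 → ℝ × ℝ) (hv : ¬ Collinear ℝ (Set.range v))
    (K : Set (ℝ × ℝ)) (hK : K = interior (convexHull ℝ (Set.range v)))
    (lam : Fin 3 → ℝ × ℝ → ℝ)
    (hlamaff : ∀ j, ∃ a b c : ℝ, (a, b) ≠ (0, 0) ∧ ∀ p, lam j p = a * p.1 + b * p.2 + c)
    (hlamv : ∀ j, ∀ p ∈ segment ℝ (v j) (v (j + 1)), lam j p = 0)
    (hlammax : ∀ j, (∀ p ∈ closure K, lam j p ≤ 1) ∧ lam j (v (j + 2)) = 1)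
    (nrm : Fin 3 → ℝ × ℝ) (hnrm : ∀ j, ‖nrm j‖ = 1)
    (hnrmo : ∀ j, (nrm j).1 * (v (j + 1) - v j).1 + (nrm j).2 * (v (j + 1) - v j).2 = 0)
    (hnrmout : ∀ j, ∀ p : ℝ × ℝ, fderiv ℝ (lam j) p (nrm j) < 0)
    (i : Fin 3) (Bi : ℝ × ℝ → ℝ)
    (hBi : Bi = fun p => (lam 0 p * lam 1 p * lam 2 p) *
      ∏ j ∈ Finset.univ.erase i, lam j p / (lam j p + lam i p)) :
    ContinuousOn Bi (closure K) ∧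
    (∀ j : Fin 3, ∀ p ∈ segment ℝ (v j) (v (j + 1)), Bi p = 0) ∧
    (∀ j : Fin 3, j ≠ i → ∀ p ∈ openSegment ℝ (v j) (v (j + 1)),
      fderiv ℝ Bi p (nrm j) = 0) ∧
    (∃ c : ℝ, c ≠ 0 ∧ ∀ p ∈ openSegment ℝ (v i) (v (i + 1)),
      fderiv ℝ Bi p (nrm i) = c * (lam (i + 2) p * lam (i + 1) p)) ∧
    ContDiffOn ℝ 1 Bi (closure K \ Set.range v) := by
  classical
  choose a b c hne habc using hlamaff
  -- decidable Fin 3 facts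
  have k3 : ∀ k : Fin 3, k = 0 ∨ k = 1 ∨ k = 2 := by decide
  have f01 : (0:Fin 3)+1 = 1 := by decide
  have f02 : (0:Fin 3)+2 = 2 := by decide
  have f11 : (1:Fin 3)+1 = 2 := by decide
  have f12 : (1:Fin 3)+2 = 0 := by decide
  have f21 : (2:Fin 3)+1 = 0 := by decide
  have f22 : (2:Fin 3)+2 = 1 := by decide
  have g1 : ∀ i : Fin 3, i+1+2 = i := by decide
  have g2 : ∀ i : Fin 3, i+2+2 = i+1 := by decide
  have g3 : ∀ i : Fin 3, i+2+1 = i := by decide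
  have g4 : ∀ i : Fin 3, i+1+1 = i+2 := by decide
  have hne12 : ∀ i : Fin 3, i + 1 ≠ i + 2 := by decide
  -- derivatives of lam
  set L : Fin 3 → (ℝ×ℝ →L[ℝ] ℝ) :=
    fun j => a j • ContinuousLinearMap.fst ℝ ℝ ℝ + b j • ContinuousLinearMap.snd ℝ ℝ ℝ with hL
  have hLD : ∀ j p, HasFDerivAt (lam j) (L j) p := by
    intro j p
    have hfe : (fun q : ℝ×ℝ => a j * q.1 + b j * q.2 + c j) = lam j := by
      funext q; rw [habc]
    rw [← hfe]
    exact ((hasFDerivAt_fst.const_mul (a j)).add (hasFDerivAt_snd.const_mul (b j))).add_const (c j)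
  have hdiff : ∀ j p, DifferentiableAt ℝ (lam j) p := fun j p => (hLD j p).differentiableAt
  have hCD : ∀ j, ContDiff ℝ 1 (lam j) := by
    intro j
    have hfe : lam j = fun q : ℝ×ℝ => a j * q.1 + b j * q.2 + c j := funext (habc j)
    rw [hfe]
    exact ((contDiff_const.mul contDiff_fst).add (contDiff_const.mul contDiff_snd)).add contDiff_const
  have hcont : ∀ j, Continuous (lam j) := fun j => (hCD j).continuous
  -- affine combination
  have comb : ∀ (j : Fin 3) (t s : ℝ), t + s = 1 → ∀ p q : ℝ×ℝ,
      lam j (t • p + s • q) = t * lam j p + s * lam j q := by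
    intro j t s hts p q
    have hs' : s = 1 - t := by linarith
    subst hs'
    simp only [habc, Prod.fst_add, Prod.snd_add, Prod.smul_fst, Prod.smul_snd, smul_eq_mul]
    ring
  -- vertex values
  have hseg0 : ∀ j, lam j (v j) = 0 := fun j => hlamv j (v j) (left_mem_segment ℝ _ _)
  have hseg1 : ∀ j, lam j (v (j+1)) = 0 := fun j => hlamv j _ (right_mem_segment ℝ _ _)
  have hseg2 : ∀ j, lam j (v (j+2)) = 1 := fun j => (hlammax j).2
  have v00 : lam 0 (v 0) = 0 := hseg0 0
  have v01 : lam 0 (v 1) = 0 := by have := hseg1 0; rwa [f01] at this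
  have v02 : lam 0 (v 2) = 1 := by have := hseg2 0; rwa [f02] at this
  have v10 : lam 1 (v 0) = 1 := by have := hseg2 1; rwa [f12] at this
  have v11 : lam 1 (v 1) = 0 := hseg0 1
  have v12 : lam 1 (v 2) = 0 := by have := hseg1 1; rwa [f11] at this
  have v20 : lam 2 (v 0) = 0 := by have := hseg1 2; rwa [f21] at this
  have v21 : lam 2 (v 1) = 1 := by have := hseg2 2; rwa [f22] at this
  have v22 : lam 2 (v 2) = 0 := hseg0 2
  -- hull
  set hull := convexHull ℝ (Set.range v) with hhull
  have hclosed : IsClosed hull := (Set.finite_range v).isClosed_convexHull ℝ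
  have hcl : closure K ⊆ hull := by
    rw [hK]
    exact (closure_mono interior_subset).trans (le_of_eq hclosed.closure_eq)
  have hrange : Set.range v = {v 0, v 1, v 2} := by
    ext q
    simp only [Set.mem_range, Set.mem_insert_iff, Set.mem_singleton_iff]
    constructor
    · rintro ⟨k, rfl⟩
      rcases k3 k with rfl | rfl | rfl
      · exact Or.inl rfl
      · exact Or.inr (Or.inl rfl)
      · exact Or.inr (Or.inr rfl)
    · rintro (rfl | rfl | rfl)
      exacts [⟨0, rfl⟩, ⟨1, rfl⟩, ⟨2, rfl⟩]
  have hmem : ∀ p ∈ hull, ∃ t0 t1 t2 : ℝ, 0 ≤ t0 ∧ 0 ≤ t1 ∧ 0 ≤ t2 ∧ t0 + t1 + t2 = 1 ∧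
      p = t0 • v 0 + t1 • v 1 + t2 • v 2 ∧ lam 0 p = t2 ∧ lam 1 p = t0 ∧ lam 2 p = t1 := by
    intro p hp
    rw [hhull, hrange, convexHull_insert ⟨v 1, by simp⟩, convexHull_pair, mem_convexJoin] at hp
    obtain ⟨x, hx, q, hq, hpseg⟩ := hp
    rw [Set.mem_singleton_iff] at hx
    subst hx
    obtain ⟨u, w, hu, hw, huw, hqrep⟩ := hq
    obtain ⟨t, s, ht, hs, hts, hprep⟩ := hpseg
    refine ⟨t, s*u, s*w, ht, mul_nonneg hs hu, mul_nonneg hs hw,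
      by linear_combination s * huw + hts, ?_, ?_, ?_, ?_⟩
    · rw [← hprep, ← hqrep]
      module
    · rw [← hprep, comb 0 t s hts, ← hqrep, comb 0 u w huw, v00, v01, v02]
      ring
    · rw [← hprep, comb 1 t s hts, ← hqrep, comb 1 u w huw, v10, v11, v12]
      ring
    · rw [← hprep, comb 2 t s hts, ← hqrep, comb 2 u w huw, v20, v21, v22]
      ring
  have nonneg : ∀ (j : Fin 3), ∀ p ∈ hull, 0 ≤ lam j p := by
    intro j p hp
    obtain ⟨t0, t1, t2, h0, h1, h2, _, _, e0, e1, e2⟩ := hmem p hp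
    rcases k3 j with rfl | rfl | rfl
    · rw [e0]; exact h2
    · rw [e1]; exact h0
    · rw [e2]; exact h1
  have hposd : ∀ p ∈ hull, p ∉ Set.range v →
      0 < lam (i+1) p + lam i p ∧ 0 < lam (i+2) p + lam i p := by
    intro p hp hpv
    obtain ⟨t0, t1, t2, h0, h1, h2, hsum, hrep, e0, e1, e2⟩ := hmem p hp
    have k0 : 0 < t0 + t1 := by
      rcases lt_or_ge 0 (t0 + t1) with h | h
      · exact h
      · exfalso
        have ht0 : t0 = 0 := by linarith
        have ht1 : t1 = 0 := by linarith
        have ht2 : t2 = 1 := by linarith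
        exact hpv ⟨2, by rw [hrep, ht0, ht1, ht2]; simp⟩
    have k1 : 0 < t1 + t2 := by
      rcases lt_or_ge 0 (t1 + t2) with h | h
      · exact h
      · exfalso
        have ht1 : t1 = 0 := by linarith
        have ht2 : t2 = 0 := by linarith
        have ht0 : t0 = 1 := by linarith
        exact hpv ⟨0, by rw [hrep, ht0, ht1, ht2]; simp⟩
    have k2 : 0 < t0 + t2 := by
      rcases lt_or_ge 0 (t0 + t2) with h | h
      · exact h
      · exfalso
        have ht0 : t0 = 0 := by linarith
        have ht2 : t2 = 0 := by linarith
        have ht1 : t1 = 1 := by linarith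
        exact hpv ⟨1, by rw [hrep, ht0, ht1, ht2]; simp⟩
    rcases k3 i with rfl | rfl | rfl
    · rw [f01, f02, e0, e1, e2]
      constructor <;> linarith
    · rw [f11, f12, e0, e1, e2]
      constructor <;> linarith
    · rw [f21, f22, e0, e1, e2]
      constructor <;> linarith
  -- rewrite Bi
  have herase : (Finset.univ.erase i : Finset (Fin 3)) = {i+1, i+2} := by
    rcases k3 i with rfl | rfl | rfl <;> decide
  have hBi' : ∀ p, Bi p = lam 0 p * lam 1 p * lam 2 p *
      (lam (i+1) p / (lam (i+1) p + lam i p)) * (lam (i+2) p / (lam (i+2) p + lam i p)) := by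
    intro p
    simp only [hBi, herase]
    rw [Finset.prod_insert (by simp [hne12 i]), Finset.prod_singleton]
    ring
  have hprod : ∀ p, lam 0 p * lam 1 p * lam 2 p = lam i p * lam (i+1) p * lam (i+2) p := by
    intro p
    rcases k3 i with rfl | rfl | rfl <;> simp only [f01, f02, f11, f12, f21, f22] <;> ring
  -- open segment values
  have openseg : ∀ j : Fin 3, ∀ p ∈ openSegment ℝ (v j) (v (j + 1)),
      lam j p = 0 ∧ 0 < lam (j + 1) p ∧ 0 < lam (j + 2) p := by
    intro j p hp
    have hseg : p ∈ segment ℝ (v j) (v (j+1)) := openSegment_subset_segment ℝ _ _ hp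
    obtain ⟨t, s, ht, hs, hts, hrep⟩ := hp
    refine ⟨hlamv j p hseg, ?_, ?_⟩ <;>
      rcases k3 j with rfl | rfl | rfl <;>
      simp only [f01, f02, f11, f12, f21, f22] at hrep ⊢ <;>
      rw [← hrep, comb _ t s hts] <;>
      simp only [v00, v01, v02, v10, v11, v12, v20, v21, v22] <;>
      linarith
  -- continuity at nice points
  have hcontAt : ∀ p : ℝ×ℝ, lam (i+1) p + lam i p ≠ 0 → lam (i+2) p + lam i p ≠ 0 →
      ContinuousAt Bi p := by
    intro p h1 h2
    have hfe : Bi = fun q => lam 0 q * lam 1 q * lam 2 q *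
        (lam (i+1) q / (lam (i+1) q + lam i q)) * (lam (i+2) q / (lam (i+2) q + lam i q)) :=
      funext hBi'
    rw [hfe]
    exact ((((hcont 0).continuousAt.mul (hcont 1).continuousAt).mul (hcont 2).continuousAt).mul
        ((hcont (i+1)).continuousAt.div ((hcont (i+1)).add (hcont i)).continuousAt h1)).mul
      ((hcont (i+2)).continuousAt.div ((hcont (i+2)).add (hcont i)).continuousAt h2)
  -- bounds
  have hfac : ∀ x y : ℝ, 0 ≤ x → 0 ≤ y → 0 ≤ x / (x + y) ∧ x / (x + y) ≤ 1 := by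
    intro x y hx hy
    rcases eq_or_lt_of_le (show (0:ℝ) ≤ x + y by linarith) with h | h
    · have hx0 : x = 0 := by linarith
      simp [hx0]
    · exact ⟨div_nonneg hx (le_of_lt h), div_le_one_of_le₀ (by linarith) (le_of_lt h)⟩
  have hBle : ∀ p ∈ hull, 0 ≤ Bi p ∧ Bi p ≤ lam 0 p * lam 1 p * lam 2 p := by
    intro p hp
    have n0 := nonneg 0 p hp; have n1 := nonneg 1 p hp; have n2 := nonneg 2 p hp
    have ni := nonneg i p hp
    have ni1 := nonneg (i+1) p hp; have ni2 := nonneg (i+2) p hp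
    obtain ⟨q1, q1'⟩ := hfac _ _ ni1 ni
    obtain ⟨q2, q2'⟩ := hfac _ _ ni2 ni
    have hP : 0 ≤ lam 0 p * lam 1 p * lam 2 p := mul_nonneg (mul_nonneg n0 n1) n2
    rw [hBi' p]
    constructor
    · exact mul_nonneg (mul_nonneg hP q1) q2
    · have s1 : lam 0 p * lam 1 p * lam 2 p * (lam (i+1) p / (lam (i+1) p + lam i p))
          ≤ lam 0 p * lam 1 p * lam 2 p := by
        have := mul_le_mul_of_nonneg_left q1' hP
        simpa using this
      have s2 : lam 0 p * lam 1 p * lam 2 p * (lam (i+1) p / (lam (i+1) p + lam i p)) *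
            (lam (i+2) p / (lam (i+2) p + lam i p))
          ≤ lam 0 p * lam 1 p * lam 2 p * (lam (i+1) p / (lam (i+1) p + lam i p)) := by
        have := mul_le_mul_of_nonneg_left q2' (mul_nonneg hP q1)
        simpa using this
      linarith
  -- goal 1
  have goal1 : ContinuousOn Bi (closure K) := by
    intro p hp
    by_cases hpv : p ∈ Set.range v
    · obtain ⟨k, rfl⟩ := hpv
      have hBv : Bi (v k) = 0 := by
        rcases k3 k with rfl | rfl | rfl <;> rw [hBi'] <;> simp [v00, v11, v22]
      have hPv : lam 0 (v k) * lam 1 (v k) * lam 2 (v k) = 0 := by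
        rcases k3 k with rfl | rfl | rfl <;> simp [v00, v11, v22]
      show Filter.Tendsto Bi (nhdsWithin (v k) (closure K)) (nhds (Bi (v k)))
      rw [hBv]
      have hPt : Filter.Tendsto (fun q => lam 0 q * lam 1 q * lam 2 q)
          (nhdsWithin (v k) (closure K)) (nhds 0) := by
        have hc : Continuous fun q => lam 0 q * lam 1 q * lam 2 q :=
          ((hcont 0).mul (hcont 1)).mul (hcont 2)
        have h5 : Filter.Tendsto (fun q => lam 0 q * lam 1 q * lam 2 q)
            (nhdsWithin (v k) (closure K))
            (nhds (lam 0 (v k) * lam 1 (v k) * lam 2 (v k))) :=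
          (hc.tendsto (v k)).mono_left nhdsWithin_le_nhds
        rwa [hPv] at h5
      apply squeeze_zero' ?_ ?_ hPt
      · filter_upwards [self_mem_nhdsWithin] with q hq
        exact (hBle q (hcl hq)).1
      · filter_upwards [self_mem_nhdsWithin] with q hq
        exact (hBle q (hcl hq)).2
    · obtain ⟨d1, d2⟩ := hposd p (hcl hp) hpv
      exact (hcontAt p (ne_of_gt d1) (ne_of_gt d2)).continuousWithinAt
  -- goal 2
  have goal2 : ∀ j : Fin 3, ∀ p ∈ segment ℝ (v j) (v (j + 1)), Bi p = 0 := by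
    intro j p hp
    have h0 : lam j p = 0 := hlamv j p hp
    rcases k3 j with rfl | rfl | rfl <;> rw [hBi', h0] <;> ring
  -- derivative helper
  have edgeD : ∀ (j : Fin 3) (g : ℝ×ℝ → ℝ) (p : ℝ×ℝ),
      (∀ q, Bi q = lam j q * lam j q * g q) → DifferentiableAt ℝ g p → lam j p = 0 →
      fderiv ℝ Bi p (nrm j) = 0 := by
    intro j g p hfun hgd hp0
    have hF : HasFDerivAt (fun q => lam j q * lam j q) (0 : ℝ×ℝ →L[ℝ] ℝ) p := by
      exact ((hLD j p).mul (hLD j p)).congr_fderiv (by simp [hp0])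
    have hB : HasFDerivAt Bi (0 : ℝ×ℝ →L[ℝ] ℝ) p := by
      have h2 := hF.mul hgd.hasFDerivAt
      have hfe : Bi = fun q => lam j q * lam j q * g q := funext hfun
      rw [hfe]
      exact h2.congr_fderiv (by simp [hp0])
    rw [hB.fderiv]
    simp
  -- goal 3
  have goal3 : ∀ j : Fin 3, j ≠ i → ∀ p ∈ openSegment ℝ (v j) (v (j + 1)),
      fderiv ℝ Bi p (nrm j) = 0 := by
    intro j hji p hp
    obtain ⟨hp0, hp1, hp2⟩ := openseg j p hp
    have hd3 : ∀ i' j' : Fin 3, j' ≠ i' → j' = i' + 1 ∨ j' = i' + 2 := by decide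
    have hji' : j = i + 1 ∨ j = i + 2 := hd3 i j hji
    rcases hji' with rfl | rfl
    · rw [g4] at hp1
      rw [g1] at hp2
      refine edgeD (i+1) (fun q => lam i q * (lam (i+2) q * lam (i+2) q) *
        ((lam (i+1) q + lam i q)⁻¹ * (lam (i+2) q + lam i q)⁻¹)) p ?_ ?_ hp0
      · intro q; rw [hBi' q, hprod q]; ring
      · have hd1 : lam (i+1) p + lam i p ≠ 0 := by
          rw [hp0, zero_add]; exact ne_of_gt hp2
        have hd2 : lam (i+2) p + lam i p ≠ 0 := ne_of_gt (add_pos hp1 hp2)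
        exact ((hdiff i p).mul ((hdiff (i+2) p).mul (hdiff (i+2) p))).mul
          ((((hdiff (i+1) p).add (hdiff i p)).inv hd1).mul
            (((hdiff (i+2) p).add (hdiff i p)).inv hd2))
    · rw [g3] at hp1
      rw [g2] at hp2
      refine edgeD (i+2) (fun q => lam i q * (lam (i+1) q * lam (i+1) q) *
        ((lam (i+2) q + lam i q)⁻¹ * (lam (i+1) q + lam i q)⁻¹)) p ?_ ?_ hp0
      · intro q; rw [hBi' q, hprod q]; ring
      · have hd1 : lam (i+2) p + lam i p ≠ 0 := by
          rw [hp0, zero_add]; exact ne_of_gt hp1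
        have hd2 : lam (i+1) p + lam i p ≠ 0 := ne_of_gt (add_pos hp2 hp1)
        exact ((hdiff i p).mul ((hdiff (i+1) p).mul (hdiff (i+1) p))).mul
          ((((hdiff (i+2) p).add (hdiff i p)).inv hd1).mul
            (((hdiff (i+1) p).add (hdiff i p)).inv hd2))
  -- goal 4
  have goal4 : ∃ c : ℝ, c ≠ 0 ∧ ∀ p ∈ openSegment ℝ (v i) (v (i + 1)),
      fderiv ℝ Bi p (nrm i) = c * (lam (i + 2) p * lam (i + 1) p) := by
    refine ⟨L i (nrm i), ?_, ?_⟩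
    · have h := hnrmout i 0
      rw [(hLD i 0).fderiv] at h
      exact ne_of_lt h
    · intro p hp
      obtain ⟨hp0, hp1, hp2⟩ := openseg i p hp
      have hd1 : lam (i+1) p + lam i p ≠ 0 := by
        rw [hp0, add_zero]; exact ne_of_gt hp1
      have hd2 : lam (i+2) p + lam i p ≠ 0 := by
        rw [hp0, add_zero]; exact ne_of_gt hp2
      have hhd : DifferentiableAt ℝ (fun q => lam (i+1) q * lam (i+1) q *
          (lam (i+2) q * lam (i+2) q) *
          ((lam (i+1) q + lam i q)⁻¹ * (lam (i+2) q + lam i q)⁻¹)) p :=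
        (((hdiff (i+1) p).mul (hdiff (i+1) p)).mul
          ((hdiff (i+2) p).mul (hdiff (i+2) p))).mul
          ((((hdiff (i+1) p).add (hdiff i p)).inv hd1).mul
            (((hdiff (i+2) p).add (hdiff i p)).inv hd2))
      have hfe : Bi = fun q => lam i q * (lam (i+1) q * lam (i+1) q *
          (lam (i+2) q * lam (i+2) q) *
          ((lam (i+1) q + lam i q)⁻¹ * (lam (i+2) q + lam i q)⁻¹)) := by
        funext q; rw [hBi' q, hprod q]; ring
      have hB2 := (hLD i p).mul hhd.hasFDerivAt
      have hB' : HasFDerivAt Bi ((lam (i+2) p * lam (i+1) p) • L i) p := by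
        rw [hfe]
        refine hB2.congr_fderiv ?_
        rw [hp0, zero_smul, zero_add]
        congr 1
        simp only [add_zero]
        field_simp [ne_of_gt hp1, ne_of_gt hp2]
      rw [hB'.fderiv]
      simp only [ContinuousLinearMap.coe_smul', Pi.smul_apply, smul_eq_mul]
      ring
  -- goal 5
  have goal5 : ContDiffOn ℝ 1 Bi (closure K \ Set.range v) := by
    intro p hp
    obtain ⟨hp1, hp2⟩ := hp
    obtain ⟨d1, d2⟩ := hposd p (hcl hp1) hp2
    apply ContDiffAt.contDiffWithinAt
    have hfe : Bi = fun q => lam 0 q * lam 1 q * lam 2 q *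
        (lam (i+1) q / (lam (i+1) q + lam i q)) * (lam (i+2) q / (lam (i+2) q + lam i q)) :=
      funext hBi'
    rw [hfe]
    exact ((((hCD 0).contDiffAt.mul (hCD 1).contDiffAt).mul (hCD 2).contDiffAt).mul
        ((hCD (i+1)).contDiffAt.div (((hCD (i+1)).add (hCD i)).contDiffAt) (ne_of_gt d1))).mul
      ((hCD (i+2)).contDiffAt.div (((hCD (i+2)).add (hCD i)).contDiffAt) (ne_of_gt d2))
  exact ⟨goal1, goal2, goal3, goal4, goal5⟩
end
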